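/- arXiv:1505.04179 — 6 statements merged into one kernel-verified Lean document; each statement's English description precedes it below -/
import Mathlib

section
/- For every integer n ≥ 1, q_n > 0: there exists a constant c > 0 such that I'(P) ≥ c for every number of outcomes r ≥ 1 and every n-chotomic quantum correlation P ∈ 𝒫₂[n,r]. -/
set_option linter.unusedSectionVars false


open Matrix Kronecker BigOperators
open scoped ComplexOrder

noncomputable section

/-- A bipartite correlation with two settings per party (`μ ν : Fin 2`, where index
`0` is setting 1 and index `1` is setting 2) and `r` outcomes per setting
(`k ℓ : Fin r`, where index `i` is outcome `i+1`): all probabilities are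
nonnegative and, for each pair of settings, they sum to one. -/
def IsCorrelation (r : ℕ) (P : Fin 2 → Fin 2 → Fin r → Fin r → ℝ) : Prop :=
  (∀ μ ν k ℓ, 0 ≤ P μ ν k ℓ) ∧ (∀ μ ν, ∑ k, ∑ ℓ, P μ ν k ℓ = 1)

/-- The Zohren–Gill expression
`I'(P) = P₂₂(k<ℓ) + P₁₂(k>ℓ) + P₁₁(k<ℓ) + P₂₁(k≥ℓ)`. -/
def ZG {r : ℕ} (P : Fin 2 → Fin 2 → Fin r → Fin r → ℝ) : ℝ :=
    (∑ k, ∑ ℓ, if k < ℓ then P 1 1 k ℓ else 0)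
  + (∑ k, ∑ ℓ, if ℓ < k then P 0 1 k ℓ else 0)
  + (∑ k, ∑ ℓ, if k < ℓ then P 0 0 k ℓ else 0)
  + (∑ k, ∑ ℓ, if ℓ ≤ k then P 1 0 k ℓ else 0)

/-- `P ∈ 𝒫₂[n,r]`: `P` is an `n`-chotomic quantum correlation with two settings per
party and `r` outcomes per setting.  There are a finite index set `Fin a`,
dimensions `dA, dB ≥ 1`, positive semidefinite states `η α` on the tensor product
space with total trace one, and for each setting positive semidefinite local
measurement operators summing to the identity with at most `n` nonzero members
for each `α`, reproducing `P` via the Born rule. -/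
def IsNChotomicQC (n r : ℕ) (P : Fin 2 → Fin 2 → Fin r → Fin r → ℝ) : Prop :=
  IsCorrelation r P ∧
  ∃ (a dA dB : ℕ), 1 ≤ dA ∧ 1 ≤ dB ∧
  ∃ (η : Fin a → Matrix (Fin dA × Fin dB) (Fin dA × Fin dB) ℂ)
    (DA : Fin 2 → Fin a → Fin r → Matrix (Fin dA) (Fin dA) ℂ)
    (DB : Fin 2 → Fin a → Fin r → Matrix (Fin dB) (Fin dB) ℂ),
    (∀ α, (η α).PosSemidef) ∧ (∑ α, (η α).trace) = 1 ∧
    (∀ μ α k, (DA μ α k).PosSemidef) ∧ (∀ μ α, ∑ k, DA μ α k = 1) ∧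
    (∀ μ α, {k | DA μ α k ≠ 0}.ncard ≤ n) ∧
    (∀ ν α k, (DB ν α k).PosSemidef) ∧ (∀ ν α, ∑ k, DB ν α k = 1) ∧
    (∀ ν α, {k | DB ν α k ≠ 0}.ncard ≤ n) ∧
    (∀ μ ν k ℓ, (P μ ν k ℓ : ℂ) = ∑ α, (η α * (DA μ α k ⊗ₖ DB ν α ℓ)).trace)

/-- `q_{n,r} = inf { I'(P) : P ∈ 𝒫₂[n,r] }`. -/
def qnr (n r : ℕ) : ℝ := sInf {x | ∃ P, IsNChotomicQC n r P ∧ ZG P = x}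

/-- `q_n = inf { q_{n,r} : r ≥ n }`. -/
def qn (n : ℕ) : ℝ := sInf {x | ∃ r, n ≤ r ∧ qnr n r = x}

/-- The no-signaling condition for a bipartite correlation. -/
def NoSignaling (r : ℕ) (P : Fin 2 → Fin 2 → Fin r → Fin r → ℝ) : Prop :=
  (∀ μ k, ∑ ℓ, P μ 0 k ℓ = ∑ ℓ, P μ 1 k ℓ) ∧
  (∀ ν ℓ, ∑ k, P 0 ν k ℓ = ∑ k, P 1 ν k ℓ)

/-- Merging the last outcome (outcome `r+1`, index `Fin.last r`) with the first
outcome (index `0`) on both parties, turning a correlation with `r+1` outcomes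
into one with `r` outcomes. -/
def mergeLast {r : ℕ} (P : Fin 2 → Fin 2 → Fin (r+1) → Fin (r+1) → ℝ) :
    Fin 2 → Fin 2 → Fin r → Fin r → ℝ :=
  fun μ ν k ℓ =>
    P μ ν k.castSucc ℓ.castSucc
    + (if (k : ℕ) = 0 then P μ ν (Fin.last r) ℓ.castSucc else 0)
    + (if (ℓ : ℕ) = 0 then P μ ν k.castSucc (Fin.last r) else 0)
    + (if (k : ℕ) = 0 ∧ (ℓ : ℕ) = 0 then P μ ν (Fin.last r) (Fin.last r) else 0)


section AuxLemmas

variable {m n : Type*} [Fintype m] [Fintype n] [DecidableEq m] [DecidableEq n]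

lemma my_kronecker_conjTranspose (A : Matrix m m ℂ) (B : Matrix n n ℂ) :
    (A ⊗ₖ B)ᴴ = Aᴴ ⊗ₖ Bᴴ := by
  ext ⟨i1, i2⟩ ⟨j1, j2⟩
  simp [Matrix.conjTranspose_apply, Matrix.kroneckerMap_apply, star_mul']

lemma my_kronecker_posSemidef {A : Matrix m m ℂ} {B : Matrix n n ℂ}
    (hA : A.PosSemidef) (hB : B.PosSemidef) : (A ⊗ₖ B).PosSemidef := by
  open scoped MatrixOrder in obtain ⟨C, hC⟩ : ∃ C : Matrix m m ℂ, A = Cᴴ * C := CStarAlgebra.nonneg_iff_eq_star_mul_self.mp hA.nonneg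
  open scoped MatrixOrder in obtain ⟨D, hD⟩ : ∃ D : Matrix n n ℂ, B = Dᴴ * D := CStarAlgebra.nonneg_iff_eq_star_mul_self.mp hB.nonneg
  rw [hC, hD, Matrix.mul_kronecker_mul, ← my_kronecker_conjTranspose]
  exact Matrix.posSemidef_conjTranspose_mul_self _

lemma my_psd_diag_re_nonneg {M : Matrix m m ℂ} (hM : M.PosSemidef) (i : m) :
    0 ≤ (M i i).re := by
  have h := hM.re_dotProduct_nonneg (Pi.single i 1)
  simpa [dotProduct, Matrix.mulVec, Pi.single_apply, Finset.sum_ite_eq] using h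

lemma my_trace_mul_re_nonneg {M N : Matrix m m ℂ} (hM : M.PosSemidef) (hN : N.PosSemidef) :
    0 ≤ ((M * N).trace).re := by
  open scoped MatrixOrder in obtain ⟨C, hC⟩ : ∃ C : Matrix m m ℂ, N = Cᴴ * C := CStarAlgebra.nonneg_iff_eq_star_mul_self.mp hN.nonneg
  have h1 : (M * N).trace = (C * M * Cᴴ).trace := by
    rw [hC, Matrix.trace_mul_comm, Matrix.mul_assoc, Matrix.trace_mul_comm]
  have h2 : (C * M * Cᴴ).PosSemidef := hM.mul_mul_conjTranspose_same C
  rw [h1, Matrix.trace, Complex.re_sum]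
  exact Finset.sum_nonneg fun i _ => my_psd_diag_re_nonneg h2 i

lemma my_kronecker_sum_left {ι : Type*} (s : Finset ι) (f : ι → Matrix m m ℂ)
    (B : Matrix n n ℂ) : (∑ i ∈ s, f i) ⊗ₖ B = ∑ i ∈ s, (f i ⊗ₖ B) := by
  ext ⟨i1, i2⟩ ⟨j1, j2⟩
  simp [Matrix.kroneckerMap_apply, Matrix.sum_apply, Finset.sum_mul]

lemma my_kronecker_sum_right {ι : Type*} (s : Finset ι) (A : Matrix m m ℂ)
    (f : ι → Matrix n n ℂ) : A ⊗ₖ (∑ i ∈ s, f i) = ∑ i ∈ s, (A ⊗ₖ f i) := by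
  ext ⟨i1, i2⟩ ⟨j1, j2⟩
  simp [Matrix.kroneckerMap_apply, Matrix.sum_apply, Finset.mul_sum]

lemma my_step_sum {r : ℕ} (c : Fin r → Fin r → ℝ) (hc : ∀ k ℓ, 0 ≤ c k ℓ)
    (f g h : Fin r → Fin r → Prop) [∀ k ℓ, Decidable (f k ℓ)] [∀ k ℓ, Decidable (g k ℓ)]
    [∀ k ℓ, Decidable (h k ℓ)]
    (himp : ∀ k ℓ, f k ℓ → g k ℓ ∨ h k ℓ) :
    (∑ k, ∑ ℓ, if f k ℓ then c k ℓ else 0)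
      ≤ (∑ k, ∑ ℓ, if g k ℓ then c k ℓ else 0) + (∑ k, ∑ ℓ, if h k ℓ then c k ℓ else 0) := by
  rw [← Finset.sum_add_distrib]
  refine Finset.sum_le_sum fun k _ => ?_
  rw [← Finset.sum_add_distrib]
  refine Finset.sum_le_sum fun ℓ _ => ?_
  have hck := hc k ℓ
  by_cases hf : f k ℓ
  · have hgh := himp k ℓ hf
    simp only [if_pos hf]
    split_ifs <;> first | linarith | tauto
  · simp only [if_neg hf]
    split_ifs <;> linarith

lemma my_step_sum' {r : ℕ} (c : Fin r → Fin r → ℝ) (hc : ∀ k ℓ, 0 ≤ c k ℓ)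
    (u v : Fin r → ℝ) (hu : ∀ k, u k = ∑ ℓ, c k ℓ) (hv : ∀ ℓ, v ℓ = ∑ k, c k ℓ)
    (f g : Fin r → Prop) (h : Fin r → Fin r → Prop) [DecidablePred f] [DecidablePred g]
    [∀ k ℓ, Decidable (h k ℓ)]
    (himp : ∀ k ℓ, f k → g ℓ ∨ h k ℓ) :
    (∑ k, if f k then u k else 0)
      ≤ (∑ ℓ, if g ℓ then v ℓ else 0) + (∑ k, ∑ ℓ, if h k ℓ then c k ℓ else 0) := by
  have e1 : (∑ k, if f k then u k else 0) = ∑ k, ∑ ℓ, if f k then c k ℓ else 0 := by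
    refine Finset.sum_congr rfl fun k _ => ?_
    by_cases hfk : f k
    · simp only [if_pos hfk]; exact hu k
    · simp only [if_neg hfk, Finset.sum_const_zero]
  have e2 : (∑ ℓ, if g ℓ then v ℓ else 0) = ∑ k, ∑ ℓ, if g ℓ then c k ℓ else 0 := by
    rw [Finset.sum_comm]
    refine Finset.sum_congr rfl fun ℓ _ => ?_
    by_cases hgl : g ℓ
    · simp only [if_pos hgl]; exact hv ℓ
    · simp only [if_neg hgl, Finset.sum_const_zero]
  rw [e1, e2]
  exact my_step_sum c hc (fun k ℓ => f k) (fun k ℓ => g ℓ) h himp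

end AuxLemmas

/-- For every `n ≥ 1`, `q_n > 0`: there is a constant `c > 0` with
`I'(P) ≥ c` for every number of outcomes `r ≥ 1` and every `P ∈ 𝒫₂[n,r]`. -/
theorem qn_positive (n : ℕ) (hn : 1 ≤ n) :
    ∃ c : ℝ, 0 < c ∧ ∀ (r : ℕ), 1 ≤ r →
      ∀ P : Fin 2 → Fin 2 → Fin r → Fin r → ℝ, IsNChotomicQC n r P → c ≤ ZG P := by
  have hn' : (0:ℝ) < n := by exact_mod_cast hn
  refine ⟨1 / n, by positivity, fun r hr P hP => ?_⟩
  obtain ⟨⟨hPnn, hPsum⟩, a, dA, dB, hdA, hdB, η, DA, DB, hη, hηtr, hDApsd, hDAsum, hDAcard,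
    hDBpsd, hDBsum, hDBcard, hBorn⟩ := hP
  classical
  set q : Fin 2 → Fin 2 → Fin a → Fin r → Fin r → ℝ :=
    fun μ ν α k ℓ => ((η α * (DA μ α k ⊗ₖ DB ν α ℓ)).trace).re with hqdef
  set mA : Fin 2 → Fin a → Fin r → ℝ :=
    fun μ α k => ((η α * (DA μ α k ⊗ₖ (1 : Matrix (Fin dB) (Fin dB) ℂ))).trace).re with hmAdef
  set mB : Fin 2 → Fin a → Fin r → ℝ :=
    fun ν α ℓ => ((η α * ((1 : Matrix (Fin dA) (Fin dA) ℂ) ⊗ₖ DB ν α ℓ)).trace).re with hmBdef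
  have hq0 : ∀ μ ν α k ℓ, 0 ≤ q μ ν α k ℓ := by
    intro μ ν α k ℓ
    simp only [hqdef]
    exact my_trace_mul_re_nonneg (hη α) (my_kronecker_posSemidef (hDApsd μ α k) (hDBpsd ν α ℓ))
  have hqB : ∀ μ ν α k, ∑ ℓ, q μ ν α k ℓ = mA μ α k := by
    intro μ ν α k
    have e : ∑ ℓ, (η α * (DA μ α k ⊗ₖ DB ν α ℓ)).trace
        = (η α * (DA μ α k ⊗ₖ (1 : Matrix (Fin dB) (Fin dB) ℂ))).trace := by
      rw [← Matrix.trace_sum, ← Matrix.mul_sum, ← my_kronecker_sum_right, hDBsum]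
    simp only [hqdef, hmAdef]
    rw [← Complex.re_sum, e]
  have hqA : ∀ μ ν α ℓ, ∑ k, q μ ν α k ℓ = mB ν α ℓ := by
    intro μ ν α ℓ
    have e : ∑ k, (η α * (DA μ α k ⊗ₖ DB ν α ℓ)).trace
        = (η α * ((1 : Matrix (Fin dA) (Fin dA) ℂ) ⊗ₖ DB ν α ℓ)).trace := by
      rw [← Matrix.trace_sum, ← Matrix.mul_sum, ← my_kronecker_sum_left, hDAsum]
    simp only [hqdef, hmBdef]
    rw [← Complex.re_sum, e]
  have hmA1sum : ∀ α, ∑ k, mA 1 α k = ((η α).trace).re := by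
    intro α
    have e : ∑ k, (η α * (DA 1 α k ⊗ₖ (1 : Matrix (Fin dB) (Fin dB) ℂ))).trace
        = (η α).trace := by
      rw [← Matrix.trace_sum, ← Matrix.mul_sum, ← my_kronecker_sum_left, hDAsum,
        Matrix.one_kronecker_one, mul_one]
    simp only [hmAdef]
    rw [← Complex.re_sum, e]
  have hmA1zero : ∀ α k, DA 1 α k = 0 → mA 1 α k = 0 := by
    intro α k hk
    simp [hmAdef, hk, Matrix.zero_kronecker]
  set T1 : Fin a → ℝ := fun α => ∑ k, ∑ ℓ, if k < ℓ then q 1 1 α k ℓ else 0 with hT1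
  set T2 : Fin a → ℝ := fun α => ∑ k, ∑ ℓ, if ℓ < k then q 0 1 α k ℓ else 0 with hT2
  set T3 : Fin a → ℝ := fun α => ∑ k, ∑ ℓ, if k < ℓ then q 0 0 α k ℓ else 0 with hT3
  set T4 : Fin a → ℝ := fun α => ∑ k, ∑ ℓ, if ℓ ≤ k then q 1 0 α k ℓ else 0 with hT4
  have key : ∀ α (t : Fin r), mA 1 α t ≤ T1 α + T2 α + T3 α + T4 α := by
    intro α t
    have s1 : (∑ k, if k ≤ t then mA 1 α k else 0)
        ≤ (∑ ℓ, if ℓ ≤ t then mB 1 α ℓ else 0) + T1 α := by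
      simp only [hT1]
      exact my_step_sum' (q 1 1 α) (hq0 1 1 α) (mA 1 α) (mB 1 α)
        (fun k => (hqB 1 1 α k).symm) (fun ℓ => (hqA 1 1 α ℓ).symm)
        (fun k => k ≤ t) (fun ℓ => ℓ ≤ t) (fun k ℓ => k < ℓ)
        (fun k ℓ hk => by
          by_cases hl : ℓ ≤ t
          · exact Or.inl hl
          · exact Or.inr (lt_of_le_of_lt hk (not_le.mp hl)))
    have s2 : (∑ ℓ, if ℓ ≤ t then mB 1 α ℓ else 0)
        ≤ (∑ k, if k ≤ t then mA 0 α k else 0) + T2 α := by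
      have h := my_step_sum' (fun x y => q 0 1 α y x) (fun x y => hq0 0 1 α y x)
        (mB 1 α) (mA 0 α)
        (fun x => (hqA 0 1 α x).symm) (fun y => (hqB 0 1 α y).symm)
        (fun x => x ≤ t) (fun y => y ≤ t) (fun x y => x < y)
        (fun x y hx => by
          by_cases hy : y ≤ t
          · exact Or.inl hy
          · exact Or.inr (lt_of_le_of_lt hx (not_le.mp hy)))
      have e : (∑ x, ∑ y, if x < y then q 0 1 α y x else 0) = T2 α := by
        simp only [hT2]; rw [Finset.sum_comm]
      rwa [e] at h
    have s3 : (∑ k, if k ≤ t then mA 0 α k else 0)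
        ≤ (∑ ℓ, if ℓ ≤ t then mB 0 α ℓ else 0) + T3 α := by
      simp only [hT3]
      exact my_step_sum' (q 0 0 α) (hq0 0 0 α) (mA 0 α) (mB 0 α)
        (fun k => (hqB 0 0 α k).symm) (fun ℓ => (hqA 0 0 α ℓ).symm)
        (fun k => k ≤ t) (fun ℓ => ℓ ≤ t) (fun k ℓ => k < ℓ)
        (fun k ℓ hk => by
          by_cases hl : ℓ ≤ t
          · exact Or.inl hl
          · exact Or.inr (lt_of_le_of_lt hk (not_le.mp hl)))
    have s4 : (∑ ℓ, if ℓ ≤ t then mB 0 α ℓ else 0)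
        ≤ (∑ k, if k < t then mA 1 α k else 0) + T4 α := by
      have h := my_step_sum' (fun x y => q 1 0 α y x) (fun x y => hq0 1 0 α y x)
        (mB 0 α) (mA 1 α)
        (fun x => (hqA 1 0 α x).symm) (fun y => (hqB 1 0 α y).symm)
        (fun x => x ≤ t) (fun y => y < t) (fun x y => x ≤ y)
        (fun x y hx => by
          by_cases hy : y < t
          · exact Or.inl hy
          · exact Or.inr (le_trans hx (not_lt.mp hy)))
      have e : (∑ x, ∑ y, if x ≤ y then q 1 0 α y x else 0) = T4 α := by
        simp only [hT4]; rw [Finset.sum_comm]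
      rwa [e] at h
    have e1 : (∑ k, if k ≤ t then mA 1 α k else 0)
        = mA 1 α t + ∑ k, if k < t then mA 1 α k else 0 := by
      rw [← Finset.sum_filter, ← Finset.sum_filter]
      have hins : Finset.univ.filter (fun k => k ≤ t)
          = insert t (Finset.univ.filter (fun k => k < t)) := by
        ext k
        simp [le_iff_lt_or_eq, or_comm]
      rw [hins, Finset.sum_insert (by simp)]
    linarith
  have hT0 : ∀ α, 0 ≤ T1 α + T2 α + T3 α + T4 α := by
    intro α
    have h1 : 0 ≤ T1 α := by
      simp only [hT1]
      refine Finset.sum_nonneg fun k _ => Finset.sum_nonneg fun ℓ _ => ?_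
      split_ifs; exacts [hq0 1 1 α k ℓ, le_refl 0]
    have h2 : 0 ≤ T2 α := by
      simp only [hT2]
      refine Finset.sum_nonneg fun k _ => Finset.sum_nonneg fun ℓ _ => ?_
      split_ifs; exacts [hq0 0 1 α k ℓ, le_refl 0]
    have h3 : 0 ≤ T3 α := by
      simp only [hT3]
      refine Finset.sum_nonneg fun k _ => Finset.sum_nonneg fun ℓ _ => ?_
      split_ifs; exacts [hq0 0 0 α k ℓ, le_refl 0]
    have h4 : 0 ≤ T4 α := by
      simp only [hT4]
      refine Finset.sum_nonneg fun k _ => Finset.sum_nonneg fun ℓ _ => ?_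
      split_ifs; exacts [hq0 1 0 α k ℓ, le_refl 0]
    linarith
  have htr : ∀ α, ((η α).trace).re ≤ (n : ℝ) * (T1 α + T2 α + T3 α + T4 α) := by
    intro α
    set s : Finset (Fin r) := Finset.univ.filter (fun k => DA 1 α k ≠ 0) with hs
    have hcard : (s.card : ℝ) ≤ n := by
      have h := hDAcard 1 α
      rw [Set.ncard_eq_toFinset_card', Set.toFinset_setOf] at h
      rw [hs]
      exact_mod_cast h
    have h2 : ∑ k, mA 1 α k = ∑ k ∈ s, mA 1 α k := by
      refine (Finset.sum_subset (Finset.subset_univ s) ?_).symm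
      intro x _ hx
      have hz : DA 1 α x = 0 := by
        by_contra hne
        exact hx (by simp [hs, hne])
      exact hmA1zero α x hz
    calc ((η α).trace).re = ∑ k, mA 1 α k := (hmA1sum α).symm
      _ = ∑ k ∈ s, mA 1 α k := h2
      _ ≤ ∑ _k ∈ s, (T1 α + T2 α + T3 α + T4 α) := Finset.sum_le_sum fun k _ => key α k
      _ = (s.card : ℝ) * (T1 α + T2 α + T3 α + T4 α) := by
          rw [Finset.sum_const, nsmul_eq_mul]
      _ ≤ (n : ℝ) * (T1 α + T2 α + T3 α + T4 α) :=
          mul_le_mul_of_nonneg_right hcard (hT0 α)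
  have hP' : ∀ μ ν k ℓ, P μ ν k ℓ = ∑ α, q μ ν α k ℓ := by
    intro μ ν k ℓ
    have h := congrArg Complex.re (hBorn μ ν k ℓ)
    rw [Complex.ofReal_re, Complex.re_sum] at h
    simpa only [hqdef] using h
  have swap3 : ∀ (F : Fin a → Fin r → Fin r → ℝ),
      ∑ α, ∑ k, ∑ ℓ, F α k ℓ = ∑ k, ∑ ℓ, ∑ α, F α k ℓ := by
    intro F
    rw [Finset.sum_comm]
    exact Finset.sum_congr rfl fun k _ => Finset.sum_comm
  have group : ∀ (μ ν : Fin 2) (cond : Fin r → Fin r → Prop) [∀ k ℓ, Decidable (cond k ℓ)],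
      (∑ k, ∑ ℓ, if cond k ℓ then P μ ν k ℓ else 0)
        = ∑ α, ∑ k, ∑ ℓ, if cond k ℓ then q μ ν α k ℓ else 0 := by
    intro μ ν cond _
    rw [swap3]
    refine Finset.sum_congr rfl fun k _ => Finset.sum_congr rfl fun ℓ _ => ?_
    by_cases h : cond k ℓ
    · simp only [if_pos h]; exact hP' μ ν k ℓ
    · simp only [if_neg h, Finset.sum_const_zero]
  have hZG : ZG P = ∑ α, (T1 α + T2 α + T3 α + T4 α) := by
    rw [Finset.sum_add_distrib, Finset.sum_add_distrib, Finset.sum_add_distrib]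
    unfold ZG
    rw [group 1 1 (fun k ℓ => k < ℓ), group 0 1 (fun k ℓ => ℓ < k),
      group 0 0 (fun k ℓ => k < ℓ), group 1 0 (fun k ℓ => ℓ ≤ k)]
  have hone : (1:ℝ) ≤ (n : ℝ) * ZG P := by
    have hηre : ∑ α, ((η α).trace).re = 1 := by
      have h := congrArg Complex.re hηtr
      rw [Complex.re_sum] at h
      simpa using h
    calc (1:ℝ) = ∑ α, ((η α).trace).re := hηre.symm
      _ ≤ ∑ α, (n : ℝ) * (T1 α + T2 α + T3 α + T4 α) := Finset.sum_le_sum fun α _ => htr α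
      _ = (n:ℝ) * ∑ α, (T1 α + T2 α + T3 α + T4 α) := by rw [Finset.mul_sum]
      _ = (n:ℝ) * ZG P := by rw [hZG]
  rw [div_le_iff₀ hn']
  rw [mul_comm] at hone
  linarith
end
end

section
/- For all integers n ≥ 1 and r ≥ 1, the infimum q_{n,r} of I' over the n-chotomic quantum correlations with r outcomes satisfies q_{n,r} ≥ 11^{1−r}; in particular q_{n,r} > 0. -/
open Matrix Kronecker BigOperators
open scoped ComplexOrder

noncomputable section

lemma aux_ite_nonneg (c : Prop) [Decidable c] {x : ℝ} (hx : 0 ≤ x) :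
    0 ≤ if c then x else 0 := by split_ifs <;> simp [hx]

lemma aux_sum_ite_zero_eq {M : Type*} [AddCommMonoid M] {m : ℕ} (x : M) :
    (∑ k : Fin (m+1), if (k : ℕ) = 0 then x else 0) = x := by
  rw [Fin.sum_univ_succ]; simp

lemma aux_sum_ite_zero_le {r : ℕ} {x : ℝ} (hx : 0 ≤ x) :
    (∑ k : Fin r, if (k : ℕ) = 0 then x else 0) ≤ x := by
  rcases r with _ | m
  · simpa using hx
  · rw [aux_sum_ite_zero_eq]

lemma aux_sum_castSucc_le {r : ℕ} (g : Fin (r+1) → ℝ) (hg : ∀ l, 0 ≤ g l) :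
    (∑ l : Fin r, g l.castSucc) ≤ ∑ l, g l := by
  rw [Fin.sum_univ_castSucc]
  exact le_add_of_nonneg_right (hg _)

lemma aux_sum2_castSucc_le {r : ℕ} (F : Fin (r+1) → Fin (r+1) → ℝ)
    (hF : ∀ k l, 0 ≤ F k l) :
    (∑ k : Fin r, ∑ l : Fin r, F k.castSucc l.castSucc) ≤ ∑ k, ∑ l, F k l := by
  calc (∑ k : Fin r, ∑ l : Fin r, F k.castSucc l.castSucc)
      ≤ ∑ k : Fin r, ∑ l : Fin (r+1), F k.castSucc l :=
        Finset.sum_le_sum fun k _ => aux_sum_castSucc_le _ (fun l => hF _ _)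
    _ ≤ ∑ k, ∑ l, F k l :=
        aux_sum_castSucc_le (fun k => ∑ l, F k l)
          (fun k => Finset.sum_nonneg fun l _ => hF _ _)

lemma aux_split {r : ℕ} (g : Fin (r+1) → Fin (r+1) → ℝ) :
    (∑ k, ∑ l, g k l)
      = (∑ k : Fin r, ∑ l : Fin r, g k.castSucc l.castSucc)
        + (∑ k : Fin r, g k.castSucc (Fin.last r))
        + (∑ l : Fin r, g (Fin.last r) l.castSucc)
        + g (Fin.last r) (Fin.last r) := by
  rw [Fin.sum_univ_castSucc (f := fun k => ∑ l, g k l),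
    Fin.sum_univ_castSucc (f := fun l => g (Fin.last r) l)]
  rw [Finset.sum_congr rfl (fun (k : Fin r) _ =>
    Fin.sum_univ_castSucc (f := fun l => g k.castSucc l)), Finset.sum_add_distrib]
  ring


-- row at last ≤ (l ≤ k)-sum
lemma aux_row_le_D {r : ℕ} (f : Fin (r+1) → Fin (r+1) → ℝ) (hf : ∀ k l, 0 ≤ f k l) :
    (∑ l, f (Fin.last r) l) ≤ ∑ k, ∑ l, if l ≤ k then f k l else 0 := by
  have h1 : (∑ l, f (Fin.last r) l) = ∑ l, if l ≤ Fin.last r then f (Fin.last r) l else 0 :=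
    Finset.sum_congr rfl fun l _ => (if_pos (Fin.le_last l)).symm
  rw [h1]
  exact Finset.single_le_sum
    (f := fun k => ∑ l, if l ≤ k then f k l else 0)
    (fun k _ => Finset.sum_nonneg fun l _ => aux_ite_nonneg _ (hf _ _))
    (Finset.mem_univ _)

-- column at last ≤ (k < l)-sum + row at last
lemma aux_col_le {r : ℕ} (f : Fin (r+1) → Fin (r+1) → ℝ) (hf : ∀ k l, 0 ≤ f k l) :
    (∑ k, f k (Fin.last r))
      ≤ (∑ k, ∑ l, if k < l then f k l else 0) + ∑ l, f (Fin.last r) l := by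
  rw [Fin.sum_univ_castSucc (f := fun k => f k (Fin.last r))]
  have h1 : (∑ k : Fin r, f k.castSucc (Fin.last r))
      ≤ ∑ k, ∑ l, if k < l then f k l else 0 := by
    calc (∑ k : Fin r, f k.castSucc (Fin.last r))
        = ∑ k : Fin r, (if k.castSucc < Fin.last r then f k.castSucc (Fin.last r) else 0) :=
          Finset.sum_congr rfl fun k _ => (if_pos (Fin.castSucc_lt_last k)).symm
      _ ≤ ∑ k, (if k < Fin.last r then f k (Fin.last r) else 0) :=
          aux_sum_castSucc_le (fun k => if k < Fin.last r then f k (Fin.last r) else 0)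
            (fun k => aux_ite_nonneg _ (hf _ _))
      _ ≤ ∑ k, ∑ l, if k < l then f k l else 0 :=
          Finset.sum_le_sum fun k _ =>
            Finset.single_le_sum (f := fun l => if k < l then f k l else 0)
              (fun l _ => aux_ite_nonneg _ (hf _ _)) (Finset.mem_univ (Fin.last r))
  have h2 : f (Fin.last r) (Fin.last r) ≤ ∑ l, f (Fin.last r) l :=
    Finset.single_le_sum (f := fun l => f (Fin.last r) l) (fun l _ => hf _ _) (Finset.mem_univ _)
  linarith

-- row at last ≤ (l < k)-sum + column at last
lemma aux_row_le {r : ℕ} (f : Fin (r+1) → Fin (r+1) → ℝ) (hf : ∀ k l, 0 ≤ f k l) :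
    (∑ l, f (Fin.last r) l)
      ≤ (∑ k, ∑ l, if l < k then f k l else 0) + ∑ k, f k (Fin.last r) := by
  rw [Fin.sum_univ_castSucc (f := fun l => f (Fin.last r) l)]
  have h1 : (∑ l : Fin r, f (Fin.last r) l.castSucc)
      ≤ ∑ k, ∑ l, if l < k then f k l else 0 := by
    calc (∑ l : Fin r, f (Fin.last r) l.castSucc)
        = ∑ l : Fin r, (if l.castSucc < Fin.last r then f (Fin.last r) l.castSucc else 0) :=
          Finset.sum_congr rfl fun l _ => (if_pos (Fin.castSucc_lt_last l)).symm
      _ ≤ ∑ l, (if l < Fin.last r then f (Fin.last r) l else 0) :=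
          aux_sum_castSucc_le (fun l => if l < Fin.last r then f (Fin.last r) l else 0)
            (fun l => aux_ite_nonneg _ (hf _ _))
      _ ≤ ∑ k, ∑ l, if l < k then f k l else 0 :=
          Finset.single_le_sum (f := fun k => ∑ l, if l < k then f k l else 0)
            (fun k _ => Finset.sum_nonneg fun l _ => aux_ite_nonneg _ (hf _ _))
            (Finset.mem_univ (Fin.last r))
  have h2 : f (Fin.last r) (Fin.last r) ≤ ∑ k, f k (Fin.last r) :=
    Finset.single_le_sum (f := fun k => f k (Fin.last r)) (fun k _ => hf _ _) (Finset.mem_univ _)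
  linarith


lemma aux_db_k0 {r : ℕ} (x : Fin r → ℝ) (hx : ∀ l, 0 ≤ x l) :
    (∑ k : Fin r, ∑ l : Fin r, if (k : ℕ) = 0 then x l else 0) ≤ ∑ l, x l := by
  rw [Finset.sum_comm]
  exact Finset.sum_le_sum fun l _ => aux_sum_ite_zero_le (hx l)

lemma aux_db_l0 {r : ℕ} (y : Fin r → ℝ) (hy : ∀ k, 0 ≤ y k) :
    (∑ k : Fin r, ∑ l : Fin r, if (l : ℕ) = 0 then y k else 0) ≤ ∑ k, y k :=
  Finset.sum_le_sum fun k _ => aux_sum_ite_zero_le (hy k)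

lemma aux_db_kl0 {r : ℕ} {c : ℝ} (hc : 0 ≤ c) :
    (∑ k : Fin r, ∑ l : Fin r, if (k : ℕ) = 0 ∧ (l : ℕ) = 0 then c else 0) ≤ c := by
  calc (∑ k : Fin r, ∑ l : Fin r, if (k : ℕ) = 0 ∧ (l : ℕ) = 0 then c else 0)
      ≤ ∑ k : Fin r, (if (k : ℕ) = 0 then c else 0) := by
        refine Finset.sum_le_sum fun k _ => ?_
        by_cases hk : (k : ℕ) = 0
        · simpa [hk] using aux_sum_ite_zero_le hc
        · simp [hk]
    _ ≤ c := aux_sum_ite_zero_le hc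

lemma aux_cond_lt {r : ℕ} (f : Fin (r+1) → Fin (r+1) → ℝ) (hf : ∀ k l, 0 ≤ f k l) :
    (∑ k : Fin r, ∑ l : Fin r, if k < l then f k.castSucc l.castSucc else 0)
      ≤ ∑ k, ∑ l, if k < l then f k l else 0 := by
  have := aux_sum2_castSucc_le (fun k l => if k < l then f k l else 0)
    (fun k l => aux_ite_nonneg _ (hf _ _))
  simpa [Fin.castSucc_lt_castSucc_iff] using this

lemma aux_cond_gt {r : ℕ} (f : Fin (r+1) → Fin (r+1) → ℝ) (hf : ∀ k l, 0 ≤ f k l) :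
    (∑ k : Fin r, ∑ l : Fin r, if l < k then f k.castSucc l.castSucc else 0)
      ≤ ∑ k, ∑ l, if l < k then f k l else 0 := by
  have := aux_sum2_castSucc_le (fun k l => if l < k then f k l else 0)
    (fun k l => aux_ite_nonneg _ (hf _ _))
  simpa [Fin.castSucc_lt_castSucc_iff] using this

lemma aux_cond_le {r : ℕ} (f : Fin (r+1) → Fin (r+1) → ℝ) (hf : ∀ k l, 0 ≤ f k l) :
    (∑ k : Fin r, ∑ l : Fin r, if l ≤ k then f k.castSucc l.castSucc else 0)
      ≤ ∑ k, ∑ l, if l ≤ k then f k l else 0 := by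
  have := aux_sum2_castSucc_le (fun k l => if l ≤ k then f k l else 0)
    (fun k l => aux_ite_nonneg _ (hf _ _))
  simpa [Fin.castSucc_le_castSucc_iff] using this

lemma aux_term_lt {r : ℕ} (f : Fin (r+1) → Fin (r+1) → ℝ) (hf : ∀ k l, 0 ≤ f k l) :
    (∑ k : Fin r, ∑ l : Fin r, if k < l then
        (f k.castSucc l.castSucc
          + (if (k : ℕ) = 0 then f (Fin.last r) l.castSucc else 0)
          + (if (l : ℕ) = 0 then f k.castSucc (Fin.last r) else 0)
          + (if (k : ℕ) = 0 ∧ (l : ℕ) = 0 then f (Fin.last r) (Fin.last r) else 0)) else 0)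
      ≤ (∑ k, ∑ l, if k < l then f k l else 0) + ∑ l, f (Fin.last r) l := by
  calc _ ≤ ∑ k : Fin r, ∑ l : Fin r,
        ((if k < l then f k.castSucc l.castSucc else 0)
          + (if (k : ℕ) = 0 then f (Fin.last r) l.castSucc else 0)) := by
        refine Finset.sum_le_sum fun k _ => Finset.sum_le_sum fun l _ => ?_
        by_cases hkl : k < l
        · have hl0 : ¬ (l : ℕ) = 0 := by
            have := (Fin.lt_def.mp hkl); omega
          simp only [if_pos hkl, if_neg hl0, hl0, and_false, if_false, add_zero]
          exact le_rfl
        · simp only [if_neg hkl]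
          exact add_nonneg le_rfl (aux_ite_nonneg _ (hf _ _))
    _ = (∑ k : Fin r, ∑ l : Fin r, if k < l then f k.castSucc l.castSucc else 0)
        + (∑ k : Fin r, ∑ l : Fin r, if (k : ℕ) = 0 then f (Fin.last r) l.castSucc else 0) := by
        simp [Finset.sum_add_distrib]
    _ ≤ (∑ k, ∑ l, if k < l then f k l else 0) + ∑ l, f (Fin.last r) l := by
        refine add_le_add (aux_cond_lt f hf) ?_
        exact (aux_db_k0 (fun l => f (Fin.last r) l.castSucc) (fun l => hf _ _)).trans
          (aux_sum_castSucc_le (fun l => f (Fin.last r) l) (fun l => hf _ _))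

lemma aux_term_gt {r : ℕ} (f : Fin (r+1) → Fin (r+1) → ℝ) (hf : ∀ k l, 0 ≤ f k l) :
    (∑ k : Fin r, ∑ l : Fin r, if l < k then
        (f k.castSucc l.castSucc
          + (if (k : ℕ) = 0 then f (Fin.last r) l.castSucc else 0)
          + (if (l : ℕ) = 0 then f k.castSucc (Fin.last r) else 0)
          + (if (k : ℕ) = 0 ∧ (l : ℕ) = 0 then f (Fin.last r) (Fin.last r) else 0)) else 0)
      ≤ (∑ k, ∑ l, if l < k then f k l else 0) + ∑ k, f k (Fin.last r) := by
  calc _ ≤ ∑ k : Fin r, ∑ l : Fin r,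
        ((if l < k then f k.castSucc l.castSucc else 0)
          + (if (l : ℕ) = 0 then f k.castSucc (Fin.last r) else 0)) := by
        refine Finset.sum_le_sum fun k _ => Finset.sum_le_sum fun l _ => ?_
        by_cases hkl : l < k
        · have hk0 : ¬ (k : ℕ) = 0 := by
            have := (Fin.lt_def.mp hkl); omega
          simp only [if_pos hkl, if_neg hk0, hk0, false_and, if_false, add_zero, zero_add]
          exact le_rfl
        · simp only [if_neg hkl]
          exact add_nonneg le_rfl (aux_ite_nonneg _ (hf _ _))
    _ = (∑ k : Fin r, ∑ l : Fin r, if l < k then f k.castSucc l.castSucc else 0)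
        + (∑ k : Fin r, ∑ l : Fin r, if (l : ℕ) = 0 then f k.castSucc (Fin.last r) else 0) := by
        simp [Finset.sum_add_distrib]
    _ ≤ (∑ k, ∑ l, if l < k then f k l else 0) + ∑ k, f k (Fin.last r) := by
        refine add_le_add (aux_cond_gt f hf) ?_
        exact (aux_db_l0 (fun k => f k.castSucc (Fin.last r)) (fun k => hf _ _)).trans
          (aux_sum_castSucc_le (fun k => f k (Fin.last r)) (fun k => hf _ _))

lemma aux_term_ge {r : ℕ} (f : Fin (r+1) → Fin (r+1) → ℝ) (hf : ∀ k l, 0 ≤ f k l) :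
    (∑ k : Fin r, ∑ l : Fin r, if l ≤ k then
        (f k.castSucc l.castSucc
          + (if (k : ℕ) = 0 then f (Fin.last r) l.castSucc else 0)
          + (if (l : ℕ) = 0 then f k.castSucc (Fin.last r) else 0)
          + (if (k : ℕ) = 0 ∧ (l : ℕ) = 0 then f (Fin.last r) (Fin.last r) else 0)) else 0)
      ≤ (∑ k, ∑ l, if l ≤ k then f k l else 0) + (∑ l, f (Fin.last r) l)
        + (∑ k, f k (Fin.last r)) + ∑ l, f (Fin.last r) l := by
  calc _ ≤ ∑ k : Fin r, ∑ l : Fin r,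
        ((if l ≤ k then f k.castSucc l.castSucc else 0)
          + (if (k : ℕ) = 0 then f (Fin.last r) l.castSucc else 0)
          + (if (l : ℕ) = 0 then f k.castSucc (Fin.last r) else 0)
          + (if (k : ℕ) = 0 ∧ (l : ℕ) = 0 then f (Fin.last r) (Fin.last r) else 0)) := by
        refine Finset.sum_le_sum fun k _ => Finset.sum_le_sum fun l _ => ?_
        by_cases hkl : l ≤ k
        · rw [if_pos hkl, if_pos hkl]
        · rw [if_neg hkl]
          exact add_nonneg (add_nonneg (add_nonneg (aux_ite_nonneg _ (hf _ _))
            (aux_ite_nonneg _ (hf _ _))) (aux_ite_nonneg _ (hf _ _)))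
            (aux_ite_nonneg _ (hf _ _))
    _ = (∑ k : Fin r, ∑ l : Fin r, if l ≤ k then f k.castSucc l.castSucc else 0)
        + (∑ k : Fin r, ∑ l : Fin r, if (k : ℕ) = 0 then f (Fin.last r) l.castSucc else 0)
        + (∑ k : Fin r, ∑ l : Fin r, if (l : ℕ) = 0 then f k.castSucc (Fin.last r) else 0)
        + (∑ k : Fin r, ∑ l : Fin r,
            if (k : ℕ) = 0 ∧ (l : ℕ) = 0 then f (Fin.last r) (Fin.last r) else 0) := by
        simp [Finset.sum_add_distrib]
    _ ≤ _ := by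
        refine add_le_add (add_le_add (add_le_add (aux_cond_le f hf) ?_) ?_) ?_
        · exact (aux_db_k0 (fun l => f (Fin.last r) l.castSucc) (fun l => hf _ _)).trans
            (aux_sum_castSucc_le (fun l => f (Fin.last r) l) (fun l => hf _ _))
        · exact (aux_db_l0 (fun k => f k.castSucc (Fin.last r)) (fun k => hf _ _)).trans
            (aux_sum_castSucc_le (fun k => f k (Fin.last r)) (fun k => hf _ _))
        · exact (aux_db_kl0 (hf _ _)).trans
            (Finset.single_le_sum (f := fun l => f (Fin.last r) l)
              (fun l _ => hf _ _) (Finset.mem_univ _))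


lemma zg_merge_le {r : ℕ} {P : Fin 2 → Fin 2 → Fin (r+1) → Fin (r+1) → ℝ}
    (hpos : ∀ μ ν k ℓ, 0 ≤ P μ ν k ℓ) (hns : NoSignaling (r+1) P) :
    ZG (mergeLast P) ≤ 11 * ZG P := by
  have e1 : (∑ k : Fin r, ∑ l : Fin r, if k < l then mergeLast P 1 1 k l else 0)
      ≤ (∑ k, ∑ l, if k < l then P 1 1 k l else 0) + ∑ l, P 1 1 (Fin.last r) l :=
    aux_term_lt (P 1 1) (hpos 1 1)
  have e2 : (∑ k : Fin r, ∑ l : Fin r, if l < k then mergeLast P 0 1 k l else 0)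
      ≤ (∑ k, ∑ l, if l < k then P 0 1 k l else 0) + ∑ k, P 0 1 k (Fin.last r) :=
    aux_term_gt (P 0 1) (hpos 0 1)
  have e3 : (∑ k : Fin r, ∑ l : Fin r, if k < l then mergeLast P 0 0 k l else 0)
      ≤ (∑ k, ∑ l, if k < l then P 0 0 k l else 0) + ∑ l, P 0 0 (Fin.last r) l :=
    aux_term_lt (P 0 0) (hpos 0 0)
  have e4 : (∑ k : Fin r, ∑ l : Fin r, if l ≤ k then mergeLast P 1 0 k l else 0)
      ≤ (∑ k, ∑ l, if l ≤ k then P 1 0 k l else 0) + (∑ l, P 1 0 (Fin.last r) l)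
        + (∑ k, P 1 0 k (Fin.last r)) + ∑ l, P 1 0 (Fin.last r) l :=
    aux_term_ge (P 1 0) (hpos 1 0)
  -- rows and columns
  have hRowD : (∑ l, P 1 0 (Fin.last r) l) ≤ ∑ k, ∑ l, if l ≤ k then P 1 0 k l else 0 :=
    aux_row_le_D (P 1 0) (hpos 1 0)
  have hRowA : (∑ l, P 1 1 (Fin.last r) l) = ∑ l, P 1 0 (Fin.last r) l :=
    (hns.1 1 (Fin.last r)).symm
  have hColA : (∑ k, P 1 1 k (Fin.last r))
      ≤ (∑ k, ∑ l, if k < l then P 1 1 k l else 0) + ∑ l, P 1 1 (Fin.last r) l :=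
    aux_col_le (P 1 1) (hpos 1 1)
  have hColB : (∑ k, P 0 1 k (Fin.last r)) = ∑ k, P 1 1 k (Fin.last r) :=
    hns.2 1 (Fin.last r)
  have hRowB : (∑ l, P 0 1 (Fin.last r) l)
      ≤ (∑ k, ∑ l, if l < k then P 0 1 k l else 0) + ∑ k, P 0 1 k (Fin.last r) :=
    aux_row_le (P 0 1) (hpos 0 1)
  have hRowC : (∑ l, P 0 0 (Fin.last r) l) = ∑ l, P 0 1 (Fin.last r) l :=
    hns.1 0 (Fin.last r)
  have hColD : (∑ k, P 1 0 k (Fin.last r)) = ∑ k, P 0 0 k (Fin.last r) :=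
    (hns.2 0 (Fin.last r)).symm
  have hColC : (∑ k, P 0 0 k (Fin.last r))
      ≤ (∑ k, ∑ l, if k < l then P 0 0 k l else 0) + ∑ l, P 0 0 (Fin.last r) l :=
    aux_col_le (P 0 0) (hpos 0 0)
  have hA0 : 0 ≤ ∑ k, ∑ l, if k < l then P 1 1 k l else 0 :=
    Finset.sum_nonneg fun k _ => Finset.sum_nonneg fun l _ => aux_ite_nonneg _ (hpos _ _ _ _)
  have hB0 : 0 ≤ ∑ k, ∑ l, if l < k then P 0 1 k l else 0 :=
    Finset.sum_nonneg fun k _ => Finset.sum_nonneg fun l _ => aux_ite_nonneg _ (hpos _ _ _ _)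
  have hC0 : 0 ≤ ∑ k, ∑ l, if k < l then P 0 0 k l else 0 :=
    Finset.sum_nonneg fun k _ => Finset.sum_nonneg fun l _ => aux_ite_nonneg _ (hpos _ _ _ _)
  have hD0 : 0 ≤ ∑ k, ∑ l, if l ≤ k then P 1 0 k l else 0 :=
    Finset.sum_nonneg fun k _ => Finset.sum_nonneg fun l _ => aux_ite_nonneg _ (hpos _ _ _ _)
  simp only [ZG]
  linarith


-- kronecker sum lemmas
lemma aux_kron_sum_right {p q : ℕ} {ι : Type*} (s : Finset ι)
    (X : Matrix (Fin p) (Fin p) ℂ) (f : ι → Matrix (Fin q) (Fin q) ℂ) :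
    X ⊗ₖ (∑ i ∈ s, f i) = ∑ i ∈ s, X ⊗ₖ f i := by
  classical
  induction s using Finset.induction_on with
  | empty => simp
  | insert _ _ h ih => rw [Finset.sum_insert h, Finset.sum_insert h, Matrix.kronecker_add, ih]

lemma aux_kron_sum_left {p q : ℕ} {ι : Type*} (s : Finset ι)
    (Y : Matrix (Fin q) (Fin q) ℂ) (f : ι → Matrix (Fin p) (Fin p) ℂ) :
    (∑ i ∈ s, f i) ⊗ₖ Y = ∑ i ∈ s, f i ⊗ₖ Y := by
  classical
  induction s using Finset.induction_on with
  | empty => simp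
  | insert _ _ h ih => rw [Finset.sum_insert h, Finset.sum_insert h, Matrix.add_kronecker, ih]

lemma aux_noSignaling {n r : ℕ} {P : Fin 2 → Fin 2 → Fin r → Fin r → ℝ}
    (h : IsNChotomicQC n r P) : NoSignaling r P := by
  obtain ⟨hc, a, dA, dB, hdA, hdB, η, DA, DB, hη, hηtr, hDApsd, hDAsum, hDAcard,
    hDBpsd, hDBsum, hDBcard, born⟩ := h
  constructor
  · intro μ k
    have e : ∀ ν : Fin 2, ((∑ l, P μ ν k l : ℝ) : ℂ)
        = ∑ α, (η α * (DA μ α k ⊗ₖ (1 : Matrix (Fin dB) (Fin dB) ℂ))).trace := by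
      intro ν
      calc ((∑ l, P μ ν k l : ℝ) : ℂ)
          = ∑ l, ∑ α, (η α * (DA μ α k ⊗ₖ DB ν α l)).trace := by
            push_cast; simp only [born]
        _ = ∑ α, ∑ l, (η α * (DA μ α k ⊗ₖ DB ν α l)).trace := Finset.sum_comm
        _ = ∑ α, (η α * (DA μ α k ⊗ₖ (1 : Matrix (Fin dB) (Fin dB) ℂ))).trace := by
            refine Finset.sum_congr rfl fun α _ => ?_
            rw [← hDBsum ν α, aux_kron_sum_right, Finset.mul_sum, Matrix.trace_sum]
    exact_mod_cast (e 0).trans (e 1).symm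
  · intro ν l
    have e : ∀ μ : Fin 2, ((∑ k, P μ ν k l : ℝ) : ℂ)
        = ∑ α, (η α * ((1 : Matrix (Fin dA) (Fin dA) ℂ) ⊗ₖ DB ν α l)).trace := by
      intro μ
      calc ((∑ k, P μ ν k l : ℝ) : ℂ)
          = ∑ k, ∑ α, (η α * (DA μ α k ⊗ₖ DB ν α l)).trace := by
            push_cast; simp only [born]
        _ = ∑ α, ∑ k, (η α * (DA μ α k ⊗ₖ DB ν α l)).trace := Finset.sum_comm
        _ = ∑ α, (η α * ((1 : Matrix (Fin dA) (Fin dA) ℂ) ⊗ₖ DB ν α l)).trace := by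
            refine Finset.sum_congr rfl fun α _ => ?_
            rw [← hDAsum μ α, aux_kron_sum_left, Finset.mul_sum, Matrix.trace_sum]
    exact_mod_cast (e 0).trans (e 1).symm


-- pull an `if` out of a sum
lemma aux_sum_ite_pull {M : Type*} [AddCommMonoid M] {ι : Type*} [Fintype ι]
    (c : Prop) [Decidable c] (g : ι → M) :
    (∑ α : ι, if c then g α else 0) = if c then (∑ α, g α) else 0 := by
  split_ifs <;> simp

lemma mergeLast_mem {n r : ℕ} (hr : 1 ≤ r) {P : Fin 2 → Fin 2 → Fin (r+1) → Fin (r+1) → ℝ}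
    (h : IsNChotomicQC n (r+1) P) : IsNChotomicQC n r (mergeLast P) := by
  obtain ⟨m, rfl⟩ : ∃ m, r = m + 1 := ⟨r - 1, by omega⟩
  obtain ⟨⟨hpos, hsum⟩, a, dA, dB, hdA, hdB, η, DA, DB, hη, hηtr, hDApsd, hDAsum, hDAcard,
    hDBpsd, hDBsum, hDBcard, born⟩ := h
  have hsum_ite_and : ∀ (x : ℝ) (k : Fin (m+1)),
      (∑ l : Fin (m+1), if (k : ℕ) = 0 ∧ (l : ℕ) = 0 then x else 0)
        = if (k : ℕ) = 0 then x else 0 := by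
    intro x k
    by_cases hk : (k : ℕ) = 0
    · simp only [hk, true_and]; exact aux_sum_ite_zero_eq x
    · simp [hk]
  constructor
  · constructor
    · intro μ ν k l
      refine add_nonneg (add_nonneg (add_nonneg (hpos _ _ _ _) ?_) ?_) ?_ <;>
        exact aux_ite_nonneg _ (hpos _ _ _ _)
    · intro μ ν
      have key : (∑ k : Fin (m+1), ∑ l : Fin (m+1), mergeLast P μ ν k l)
          = ∑ k : Fin (m+2), ∑ l : Fin (m+2), P μ ν k l := by
        rw [aux_split (P μ ν)]
        simp only [mergeLast, Finset.sum_add_distrib]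
        have h2 : (∑ k : Fin (m+1), ∑ l : Fin (m+1),
            if (k : ℕ) = 0 then P μ ν (Fin.last (m+1)) l.castSucc else 0)
            = ∑ l : Fin (m+1), P μ ν (Fin.last (m+1)) l.castSucc := by
          rw [Finset.sum_comm]
          exact Finset.sum_congr rfl fun l _ => aux_sum_ite_zero_eq _
        have h3 : (∑ k : Fin (m+1), ∑ l : Fin (m+1),
            if (l : ℕ) = 0 then P μ ν k.castSucc (Fin.last (m+1)) else 0)
            = ∑ k : Fin (m+1), P μ ν k.castSucc (Fin.last (m+1)) :=
          Finset.sum_congr rfl fun k _ => aux_sum_ite_zero_eq _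
        have h4 : (∑ k : Fin (m+1), ∑ l : Fin (m+1),
            if (k : ℕ) = 0 ∧ (l : ℕ) = 0 then P μ ν (Fin.last (m+1)) (Fin.last (m+1)) else 0)
            = P μ ν (Fin.last (m+1)) (Fin.last (m+1)) := by
          rw [Finset.sum_congr rfl fun k _ => hsum_ite_and _ k]
          exact aux_sum_ite_zero_eq _
        rw [h2, h3, h4]
        ring
      rw [key, hsum μ ν]
  refine ⟨a, dA, dB, hdA, hdB, η,
    (fun μ α k => DA μ α k.castSucc + (if (k : ℕ) = 0 then DA μ α (Fin.last (m+1)) else 0)),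
    (fun ν α l => DB ν α l.castSucc + (if (l : ℕ) = 0 then DB ν α (Fin.last (m+1)) else 0)),
    hη, hηtr, ?_, ?_, ?_, ?_, ?_, ?_, ?_⟩
  · intro μ α k
    refine (hDApsd μ α _).add ?_
    split_ifs
    exacts [hDApsd μ α _, Matrix.PosSemidef.zero]
  · intro μ α
    rw [Finset.sum_add_distrib, aux_sum_ite_zero_eq, ← Fin.sum_univ_castSucc]
    exact hDAsum μ α
  · intro μ α
    refine le_trans ?_ (hDAcard μ α)
    refine Set.ncard_le_ncard_of_injOn
      (fun k => if (k : ℕ) = 0 ∧ DA μ α 0 = 0 then Fin.last (m+1) else k.castSucc)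
      ?_ ?_ (Set.toFinite _)
    · intro k hk
      simp only [Set.mem_setOf_eq] at hk ⊢
      by_cases h0 : (k : ℕ) = 0 ∧ DA μ α 0 = 0
      · rw [if_pos h0]
        have hkc : k.castSucc = 0 := by
          rw [Fin.ext_iff]; simpa using h0.1
        rw [hkc, h0.2, if_pos h0.1, zero_add] at hk
        exact hk
      · rw [if_neg h0]
        by_cases hk0 : (k : ℕ) = 0
        · have hDA0 : DA μ α 0 ≠ 0 := fun hc => h0 ⟨hk0, hc⟩
          have hkc : k.castSucc = 0 := by rw [Fin.ext_iff]; simpa using hk0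
          rw [hkc]; exact hDA0
        · rw [if_neg hk0, add_zero] at hk
          exact hk
    · intro x hx y hy hxy
      dsimp only at hxy
      by_cases hx0 : (x : ℕ) = 0 ∧ DA μ α 0 = 0 <;> by_cases hy0 : (y : ℕ) = 0 ∧ DA μ α 0 = 0
      · exact Fin.ext (by rw [hx0.1, hy0.1])
      · rw [if_pos hx0, if_neg hy0] at hxy
        exact absurd hxy.symm (Fin.castSucc_lt_last y).ne
      · rw [if_neg hx0, if_pos hy0] at hxy
        exact absurd hxy (Fin.castSucc_lt_last x).ne
      · rw [if_neg hx0, if_neg hy0] at hxy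
        exact Fin.castSucc_injective _ hxy
  · intro ν α k
    refine (hDBpsd ν α _).add ?_
    split_ifs
    exacts [hDBpsd ν α _, Matrix.PosSemidef.zero]
  · intro ν α
    rw [Finset.sum_add_distrib, aux_sum_ite_zero_eq, ← Fin.sum_univ_castSucc]
    exact hDBsum ν α
  · intro ν α
    refine le_trans ?_ (hDBcard ν α)
    refine Set.ncard_le_ncard_of_injOn
      (fun k => if (k : ℕ) = 0 ∧ DB ν α 0 = 0 then Fin.last (m+1) else k.castSucc)
      ?_ ?_ (Set.toFinite _)
    · intro k hk
      simp only [Set.mem_setOf_eq] at hk ⊢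
      by_cases h0 : (k : ℕ) = 0 ∧ DB ν α 0 = 0
      · rw [if_pos h0]
        have hkc : k.castSucc = 0 := by
          rw [Fin.ext_iff]; simpa using h0.1
        rw [hkc, h0.2, if_pos h0.1, zero_add] at hk
        exact hk
      · rw [if_neg h0]
        by_cases hk0 : (k : ℕ) = 0
        · have hDB0 : DB ν α 0 ≠ 0 := fun hc => h0 ⟨hk0, hc⟩
          have hkc : k.castSucc = 0 := by rw [Fin.ext_iff]; simpa using hk0
          rw [hkc]; exact hDB0
        · rw [if_neg hk0, add_zero] at hk
          exact hk
    · intro x hx y hy hxy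
      dsimp only at hxy
      by_cases hx0 : (x : ℕ) = 0 ∧ DB ν α 0 = 0 <;> by_cases hy0 : (y : ℕ) = 0 ∧ DB ν α 0 = 0
      · exact Fin.ext (by rw [hx0.1, hy0.1])
      · rw [if_pos hx0, if_neg hy0] at hxy
        exact absurd hxy.symm (Fin.castSucc_lt_last y).ne
      · rw [if_neg hx0, if_pos hy0] at hxy
        exact absurd hxy (Fin.castSucc_lt_last x).ne
      · rw [if_neg hx0, if_neg hy0] at hxy
        exact Fin.castSucc_injective _ hxy
  · intro μ ν k l
    have hexp : ∀ α : Fin a,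
        (η α * ((DA μ α k.castSucc + (if (k : ℕ) = 0 then DA μ α (Fin.last (m+1)) else 0))
          ⊗ₖ (DB ν α l.castSucc + (if (l : ℕ) = 0 then DB ν α (Fin.last (m+1)) else 0)))).trace
        = (η α * (DA μ α k.castSucc ⊗ₖ DB ν α l.castSucc)).trace
          + (if (k : ℕ) = 0 then
              (η α * (DA μ α (Fin.last (m+1)) ⊗ₖ DB ν α l.castSucc)).trace else 0)
          + (if (l : ℕ) = 0 then
              (η α * (DA μ α k.castSucc ⊗ₖ DB ν α (Fin.last (m+1)))).trace else 0)
          + (if (k : ℕ) = 0 ∧ (l : ℕ) = 0 then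
              (η α * (DA μ α (Fin.last (m+1)) ⊗ₖ DB ν α (Fin.last (m+1)))).trace else 0) := by
      intro α
      by_cases hk : (k : ℕ) = 0 <;> by_cases hl : (l : ℕ) = 0 <;>
        simp [hk, hl, Matrix.add_kronecker, Matrix.kronecker_add, mul_add, Matrix.trace_add] <;>
        ring
    rw [Finset.sum_congr rfl fun α _ => hexp α]
    simp only [Finset.sum_add_distrib, aux_sum_ite_pull]
    rw [← born μ ν k.castSucc l.castSucc, ← born μ ν (Fin.last (m+1)) l.castSucc,
      ← born μ ν k.castSucc (Fin.last (m+1)), ← born μ ν (Fin.last (m+1)) (Fin.last (m+1))]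
    simp only [mergeLast]
    push_cast [apply_ite (fun x : ℝ => (x : ℂ))]
    ring


lemma zg_one {P : Fin 2 → Fin 2 → Fin 1 → Fin 1 → ℝ} (h : IsCorrelation 1 P) :
    ZG P = 1 := by
  have h10 := h.2 1 0
  simp only [ZG]
  simp only [Fin.sum_univ_one] at *
  simp only [lt_self_iff_false, if_false, le_refl, if_true]
  simpa using h10

-- the deterministic witness
lemma zg_witness (n m : ℕ) (hn : 1 ≤ n) :
    IsNChotomicQC n (m+1)
      (fun _ _ k l => if (k : ℕ) = 0 ∧ (l : ℕ) = 0 then 1 else 0) := by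
  have hone : (1 : Matrix (Fin 1) (Fin 1) ℂ) ≠ 0 := by
    intro hcon
    have := congrArg (fun M : Matrix (Fin 1) (Fin 1) ℂ => M 0 0) hcon
    simp [Matrix.one_apply] at this
  have hsum_ite_and : ∀ (k : Fin (m+1)),
      (∑ l : Fin (m+1), if (k : ℕ) = 0 ∧ (l : ℕ) = 0 then (1:ℝ) else 0)
        = if (k : ℕ) = 0 then 1 else 0 := by
    intro k
    by_cases hk : (k : ℕ) = 0
    · simp only [hk, true_and]; exact aux_sum_ite_zero_eq _
    · simp [hk]
  have hcard : {k : Fin (m+1) |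
      (if (k : ℕ) = 0 then (1 : Matrix (Fin 1) (Fin 1) ℂ) else 0) ≠ 0}.ncard ≤ n := by
    have hset : {k : Fin (m+1) |
        (if (k : ℕ) = 0 then (1 : Matrix (Fin 1) (Fin 1) ℂ) else 0) ≠ 0} = {(0 : Fin (m+1))} := by
      ext k
      by_cases hk : (k : ℕ) = 0 <;> simp [hk, hone, Fin.ext_iff, -Fin.val_eq_zero_iff]
    rw [hset, Set.ncard_singleton]
    exact hn
  refine ⟨⟨fun μ ν k l => by positivity, fun μ ν => ?_⟩,
    1, 1, 1, le_refl 1, le_refl 1,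
    (fun _ => 1),
    (fun _ _ k => if (k : ℕ) = 0 then 1 else 0),
    (fun _ _ l => if (l : ℕ) = 0 then 1 else 0),
    fun _ => Matrix.PosSemidef.one, by simp,
    ?_, ?_, fun _ _ => hcard, ?_, ?_, fun _ _ => hcard, ?_⟩
  · rw [Finset.sum_congr rfl fun k _ => hsum_ite_and k]
    exact aux_sum_ite_zero_eq _
  · intro μ α k
    dsimp only
    split_ifs
    exacts [Matrix.PosSemidef.one, Matrix.PosSemidef.zero]
  · intro μ α
    exact aux_sum_ite_zero_eq _
  · intro ν α k
    dsimp only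
    split_ifs
    exacts [Matrix.PosSemidef.one, Matrix.PosSemidef.zero]
  · intro ν α
    exact aux_sum_ite_zero_eq _
  · intro μ ν k l
    by_cases hk : (k : ℕ) = 0 <;> by_cases hl : (l : ℕ) = 0 <;>
      simp [hk, hl, Matrix.one_kronecker_one, Matrix.zero_kronecker, Matrix.kronecker_zero]


lemma zg_key {n : ℕ} : ∀ r, 1 ≤ r → ∀ P : Fin 2 → Fin 2 → Fin r → Fin r → ℝ,
    IsNChotomicQC n r P → (11 : ℝ) ^ (1 - (r : ℤ)) ≤ ZG P := by
  intro r hr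
  induction r, hr using Nat.le_induction with
  | base =>
    intro P hP
    rw [show (1 - ((1 : ℕ) : ℤ)) = 0 by norm_num, zpow_zero, zg_one hP.1]
  | succ r hr ih =>
    intro P hP
    have hQ := mergeLast_mem hr hP
    have h1 := ih (mergeLast P) hQ
    have h2 := zg_merge_le hP.1.1 (aux_noSignaling hP)
    have hpow : (11 : ℝ) ^ (1 - ((r + 1 : ℕ) : ℤ)) = (11 : ℝ) ^ (1 - (r : ℤ)) / 11 := by
      rw [show (1 - ((r + 1 : ℕ) : ℤ)) = (1 - (r : ℤ)) - 1 by push_cast; ring,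
        zpow_sub₀ (by norm_num), zpow_one]
    rw [hpow]
    linarith

/-- For all `n ≥ 1` and `r ≥ 1`, the infimum `q_{n,r}` of `I'` over
`𝒫₂[n,r]` satisfies `q_{n,r} ≥ 11^(1-r)`; in particular `q_{n,r} > 0`. -/
theorem qnr_ge_eleven_pow (n r : ℕ) (hn : 1 ≤ n) (hr : 1 ≤ r) :
    (11 : ℝ) ^ (1 - (r : ℤ)) ≤ qnr n r ∧ 0 < qnr n r := by
  obtain ⟨m, rfl⟩ : ∃ m, r = m + 1 := ⟨r - 1, by omega⟩
  have hP0 := zg_witness n m hn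
  have hne : {x | ∃ P, IsNChotomicQC n (m+1) P ∧ ZG P = x}.Nonempty :=
    ⟨_, _, hP0, rfl⟩
  have hbound : (11 : ℝ) ^ (1 - ((m + 1 : ℕ) : ℤ)) ≤ qnr n (m+1) := by
    refine le_csInf hne ?_
    rintro x ⟨P, hP, rfl⟩
    exact zg_key (m+1) (by omega) P hP
  refine ⟨hbound, lt_of_lt_of_le ?_ hbound⟩
  positivity
end
end

section
/- Every no-signaling correlation with r outcomes satisfies I'(P) ≥ 11^{1−r}. -/
open Matrix Kronecker BigOperators
open scoped ComplexOrder

noncomputable section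

open Finset in
lemma sum_ite_val_zero {m : ℕ} (c : ℝ) :
    (∑ ℓ : Fin (m+1), if (ℓ:ℕ) = 0 then c else 0) = c := by
  rw [Finset.sum_eq_single (0 : Fin (m+1))]
  · simp
  · intro b _ hb
    simp only [ite_eq_right_iff]
    intro hb0
    exact absurd (Fin.ext hb0) hb
  · simp

open Finset in
lemma mergeLast_row_sum {m : ℕ} (P : Fin 2 → Fin 2 → Fin (m+2) → Fin (m+2) → ℝ)
    (μ ν : Fin 2) (k : Fin (m+1)) :
    ∑ ℓ, mergeLast P μ ν k ℓ =
      (∑ ℓ, P μ ν k.castSucc ℓ)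
      + (if (k:ℕ) = 0 then ∑ ℓ, P μ ν (Fin.last (m+1)) ℓ else 0) := by
  simp only [mergeLast, Finset.sum_add_distrib, ite_and, Finset.sum_ite_irrel,
    sum_ite_val_zero, Finset.sum_const_zero]
  rw [Fin.sum_univ_castSucc (f := fun ℓ => P μ ν k.castSucc ℓ),
    Fin.sum_univ_castSucc (f := fun ℓ => P μ ν (Fin.last (m+1)) ℓ)]
  split_ifs <;> ring

open Finset in
lemma mergeLast_col_sum {m : ℕ} (P : Fin 2 → Fin 2 → Fin (m+2) → Fin (m+2) → ℝ)
    (μ ν : Fin 2) (ℓ : Fin (m+1)) :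
    ∑ k, mergeLast P μ ν k ℓ =
      (∑ k, P μ ν k ℓ.castSucc)
      + (if (ℓ:ℕ) = 0 then ∑ k, P μ ν k (Fin.last (m+1)) else 0) := by
  simp only [mergeLast, Finset.sum_add_distrib, ite_and, Finset.sum_ite_irrel,
    sum_ite_val_zero, Finset.sum_const_zero]
  rw [Fin.sum_univ_castSucc (f := fun k => P μ ν k ℓ.castSucc),
    Fin.sum_univ_castSucc (f := fun k => P μ ν k (Fin.last (m+1)))]
  split_ifs <;> ring
lemma ite_nonneg' {c : Prop} [Decidable c] {x : ℝ} (hx : 0 ≤ x) :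
    0 ≤ if c then x else 0 := by split <;> simp [hx]

lemma row_le_double {n : ℕ} (g : Fin n → Fin n → ℝ) (hg : ∀ k ℓ, 0 ≤ g k ℓ)
    (k0 : Fin n) : (∑ ℓ, g k0 ℓ) ≤ ∑ k, ∑ ℓ, g k ℓ :=
  Finset.single_le_sum (f := fun k => ∑ ℓ, g k ℓ)
    (fun k _ => Finset.sum_nonneg fun ℓ _ => hg k ℓ) (Finset.mem_univ k0)

lemma col_le_double {n : ℕ} (g : Fin n → Fin n → ℝ) (hg : ∀ k ℓ, 0 ≤ g k ℓ)
    (ℓ0 : Fin n) : (∑ k, g k ℓ0) ≤ ∑ k, ∑ ℓ, g k ℓ := by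
  rw [Finset.sum_comm]
  exact row_le_double (fun ℓ k => g k ℓ) (fun ℓ k => hg k ℓ) ℓ0

lemma entry_le_row {n : ℕ} (g : Fin n → ℝ) (hg : ∀ ℓ, 0 ≤ g ℓ) (ℓ0 : Fin n) :
    g ℓ0 ≤ ∑ ℓ, g ℓ :=
  Finset.single_le_sum (fun ℓ _ => hg ℓ) (Finset.mem_univ ℓ0)

lemma lift_double_sum {n : ℕ} (f : Fin (n+2) → Fin (n+2) → ℝ)
    (hf : ∀ k ℓ, 0 ≤ f k ℓ) (rel : ℕ → ℕ → Prop) [DecidableRel rel] :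
    (∑ k : Fin (n+1), ∑ ℓ : Fin (n+1),
        if rel (k : ℕ) (ℓ : ℕ) then f k.castSucc ℓ.castSucc else 0)
    ≤ ∑ k : Fin (n+2), ∑ ℓ : Fin (n+2), if rel (k : ℕ) (ℓ : ℕ) then f k ℓ else 0 := by
  calc (∑ k : Fin (n+1), ∑ ℓ : Fin (n+1),
        if rel (k : ℕ) (ℓ : ℕ) then f k.castSucc ℓ.castSucc else 0)
      ≤ ∑ k : Fin (n+1), ∑ ℓ : Fin (n+2),
        if rel ((k.castSucc : Fin (n+2)) : ℕ) (ℓ : ℕ) then f k.castSucc ℓ else 0 := by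
        refine Finset.sum_le_sum fun k _ => ?_
        rw [Fin.sum_univ_castSucc
          (f := fun ℓ => if rel ((k.castSucc : Fin (n+2)) : ℕ) (ℓ : ℕ) then f k.castSucc ℓ else 0)]
        simp only [Fin.coe_castSucc]
        exact le_add_of_nonneg_right (ite_nonneg' (hf _ _))
    _ ≤ _ := by
        rw [Fin.sum_univ_castSucc
          (f := fun k : Fin (n+2) => ∑ ℓ : Fin (n+2), if rel (k : ℕ) (ℓ : ℕ) then f k ℓ else 0)]
        exact le_add_of_nonneg_right
          (Finset.sum_nonneg fun ℓ _ => ite_nonneg' (hf _ _))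
lemma mergeLast_nonneg {m : ℕ} {P : Fin 2 → Fin 2 → Fin (m+2) → Fin (m+2) → ℝ}
    (h : ∀ μ ν k ℓ, 0 ≤ P μ ν k ℓ) (μ ν : Fin 2) (k ℓ : Fin (m+1)) :
    0 ≤ mergeLast P μ ν k ℓ := by
  unfold mergeLast
  have h1 := ite_nonneg' (c := (k:ℕ) = 0) (h μ ν (Fin.last (m+1)) ℓ.castSucc)
  have h2 := ite_nonneg' (c := (ℓ:ℕ) = 0) (h μ ν k.castSucc (Fin.last (m+1)))
  have h3 := ite_nonneg' (c := (k:ℕ) = 0 ∧ (ℓ:ℕ) = 0)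
    (h μ ν (Fin.last (m+1)) (Fin.last (m+1)))
  have h4 := h μ ν k.castSucc ℓ.castSucc
  linarith

lemma mergeLast_isCorrelation {m : ℕ}
    {P : Fin 2 → Fin 2 → Fin (m+2) → Fin (m+2) → ℝ}
    (hP : IsCorrelation (m+2) P) : IsCorrelation (m+1) (mergeLast P) := by
  constructor
  · exact fun μ ν k ℓ => mergeLast_nonneg hP.1 μ ν k ℓ
  · intro μ ν
    have hsum : ∑ k, ∑ ℓ, mergeLast P μ ν k ℓ
        = ∑ k : Fin (m+1), ((∑ ℓ, P μ ν k.castSucc ℓ)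
          + (if (k:ℕ) = 0 then ∑ ℓ, P μ ν (Fin.last (m+1)) ℓ else 0)) :=
      Finset.sum_congr rfl fun k _ => mergeLast_row_sum P μ ν k
    rw [hsum, Finset.sum_add_distrib, sum_ite_val_zero]
    have := hP.2 μ ν
    rw [Fin.sum_univ_castSucc
      (f := fun k : Fin (m+2) => ∑ ℓ, P μ ν k ℓ)] at this
    linarith

lemma mergeLast_noSignaling {m : ℕ}
    {P : Fin 2 → Fin 2 → Fin (m+2) → Fin (m+2) → ℝ}
    (hNS : NoSignaling (m+2) P) : NoSignaling (m+1) (mergeLast P) := by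
  constructor
  · intro μ k
    rw [mergeLast_row_sum, mergeLast_row_sum, hNS.1 μ k.castSucc,
      hNS.1 μ (Fin.last (m+1))]
  · intro ν ℓ
    rw [mergeLast_col_sum, mergeLast_col_sum, hNS.2 ν ℓ.castSucc,
      hNS.2 ν (Fin.last (m+1))]
lemma lift_lt {n : ℕ} (f : Fin (n+2) → Fin (n+2) → ℝ) (hf : ∀ k ℓ, 0 ≤ f k ℓ) :
    (∑ k : Fin (n+1), ∑ ℓ : Fin (n+1), if k < ℓ then f k.castSucc ℓ.castSucc else 0)
    ≤ ∑ k : Fin (n+2), ∑ ℓ : Fin (n+2), if k < ℓ then f k ℓ else 0 := by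
  calc _ ≤ ∑ k : Fin (n+1), ∑ ℓ : Fin (n+2),
        if k.castSucc < ℓ then f k.castSucc ℓ else 0 := by
        refine Finset.sum_le_sum fun k _ => ?_
        rw [Fin.sum_univ_castSucc
          (f := fun ℓ : Fin (n+2) => if k.castSucc < ℓ then f k.castSucc ℓ else 0)]
        simp only [Fin.castSucc_lt_castSucc_iff]
        exact le_add_of_nonneg_right (ite_nonneg' (hf _ _))
    _ ≤ _ := by
        rw [Fin.sum_univ_castSucc
          (f := fun k : Fin (n+2) => ∑ ℓ : Fin (n+2), if k < ℓ then f k ℓ else 0)]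
        exact le_add_of_nonneg_right (Finset.sum_nonneg fun ℓ _ => ite_nonneg' (hf _ _))

lemma lift_gt {n : ℕ} (f : Fin (n+2) → Fin (n+2) → ℝ) (hf : ∀ k ℓ, 0 ≤ f k ℓ) :
    (∑ k : Fin (n+1), ∑ ℓ : Fin (n+1), if ℓ < k then f k.castSucc ℓ.castSucc else 0)
    ≤ ∑ k : Fin (n+2), ∑ ℓ : Fin (n+2), if ℓ < k then f k ℓ else 0 := by
  calc _ ≤ ∑ k : Fin (n+1), ∑ ℓ : Fin (n+2),
        if ℓ < k.castSucc then f k.castSucc ℓ else 0 := by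
        refine Finset.sum_le_sum fun k _ => ?_
        rw [Fin.sum_univ_castSucc
          (f := fun ℓ : Fin (n+2) => if ℓ < k.castSucc then f k.castSucc ℓ else 0)]
        simp only [Fin.castSucc_lt_castSucc_iff]
        exact le_add_of_nonneg_right (ite_nonneg' (hf _ _))
    _ ≤ _ := by
        rw [Fin.sum_univ_castSucc
          (f := fun k : Fin (n+2) => ∑ ℓ : Fin (n+2), if ℓ < k then f k ℓ else 0)]
        exact le_add_of_nonneg_right (Finset.sum_nonneg fun ℓ _ => ite_nonneg' (hf _ _))

lemma lift_ge {n : ℕ} (f : Fin (n+2) → Fin (n+2) → ℝ) (hf : ∀ k ℓ, 0 ≤ f k ℓ) :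
    (∑ k : Fin (n+1), ∑ ℓ : Fin (n+1), if ℓ ≤ k then f k.castSucc ℓ.castSucc else 0)
    ≤ ∑ k : Fin (n+2), ∑ ℓ : Fin (n+2), if ℓ ≤ k then f k ℓ else 0 := by
  calc _ ≤ ∑ k : Fin (n+1), ∑ ℓ : Fin (n+2),
        if ℓ ≤ k.castSucc then f k.castSucc ℓ else 0 := by
        refine Finset.sum_le_sum fun k _ => ?_
        rw [Fin.sum_univ_castSucc
          (f := fun ℓ : Fin (n+2) => if ℓ ≤ k.castSucc then f k.castSucc ℓ else 0)]
        simp only [Fin.castSucc_le_castSucc_iff]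
        exact le_add_of_nonneg_right (ite_nonneg' (hf _ _))
    _ ≤ _ := by
        rw [Fin.sum_univ_castSucc
          (f := fun k : Fin (n+2) => ∑ ℓ : Fin (n+2), if ℓ ≤ k then f k ℓ else 0)]
        exact le_add_of_nonneg_right (Finset.sum_nonneg fun ℓ _ => ite_nonneg' (hf _ _))

set_option maxRecDepth 8000 in
lemma AQ_le {m : ℕ} {P : Fin 2 → Fin 2 → Fin (m+2) → Fin (m+2) → ℝ}
    (hpos : ∀ μ ν k ℓ, 0 ≤ P μ ν k ℓ) (μ ν : Fin 2) :
    (∑ k, ∑ ℓ, if k < ℓ then mergeLast P μ ν k ℓ else 0)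
      ≤ (∑ k, ∑ ℓ, if k < ℓ then P μ ν k ℓ else 0)
        + ∑ ℓ : Fin (m+2), P μ ν (Fin.last (m+1)) ℓ := by
    have hext_row : (∑ ℓ : Fin (m+1), P μ ν (Fin.last (m+1)) ℓ.castSucc)
        ≤ ∑ ℓ : Fin (m+2), P μ ν (Fin.last (m+1)) ℓ := by
      rw [Fin.sum_univ_castSucc (f := fun ℓ => P μ ν (Fin.last (m+1)) ℓ)]
      exact le_add_of_nonneg_right (hpos _ _ _ _)
    have hpt : ∀ k ℓ : Fin (m+1), (if k < ℓ then mergeLast P μ ν k ℓ else 0)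
        ≤ (if k < ℓ then P μ ν k.castSucc ℓ.castSucc else 0)
          + (if (k:ℕ) = 0 then P μ ν (Fin.last (m+1)) ℓ.castSucc else 0) := by
      intro k ℓ
      by_cases hkl : k < ℓ
      · have hl0 : ¬ (ℓ:ℕ) = 0 := by have := Fin.lt_def.mp hkl; omega
        simp [mergeLast, hkl, hl0]
      · simp only [if_neg hkl]
        exact add_nonneg le_rfl (ite_nonneg' (hpos _ _ _ _))
    calc (∑ k, ∑ ℓ, if k < ℓ then mergeLast P μ ν k ℓ else 0)
        ≤ ∑ k : Fin (m+1), ∑ ℓ : Fin (m+1),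
            ((if k < ℓ then P μ ν k.castSucc ℓ.castSucc else 0)
              + (if (k:ℕ) = 0 then P μ ν (Fin.last (m+1)) ℓ.castSucc else 0)) :=
          Finset.sum_le_sum fun k _ => Finset.sum_le_sum fun ℓ _ => hpt k ℓ
      _ = (∑ k : Fin (m+1), ∑ ℓ : Fin (m+1),
            if k < ℓ then P μ ν k.castSucc ℓ.castSucc else 0)
          + ∑ ℓ : Fin (m+1), P μ ν (Fin.last (m+1)) ℓ.castSucc := by
          simp only [Finset.sum_add_distrib, Finset.sum_ite_irrel,
            Finset.sum_const_zero, sum_ite_val_zero]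
      _ ≤ _ := add_le_add (lift_lt (P μ ν) (fun k ℓ => hpos _ _ _ _)) hext_row

set_option maxRecDepth 8000 in
lemma BQ_le {m : ℕ} {P : Fin 2 → Fin 2 → Fin (m+2) → Fin (m+2) → ℝ}
    (hpos : ∀ μ ν k ℓ, 0 ≤ P μ ν k ℓ) :
    (∑ k, ∑ ℓ, if ℓ < k then mergeLast P 0 1 k ℓ else 0)
      ≤ (∑ k, ∑ ℓ, if ℓ < k then P 0 1 k ℓ else 0)
        + ∑ k : Fin (m+2), P 0 1 k (Fin.last (m+1)) := by
    have hext_col : (∑ k : Fin (m+1), P 0 1 k.castSucc (Fin.last (m+1)))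
        ≤ ∑ k : Fin (m+2), P 0 1 k (Fin.last (m+1)) := by
      rw [Fin.sum_univ_castSucc (f := fun k => P 0 1 k (Fin.last (m+1)))]
      exact le_add_of_nonneg_right (hpos _ _ _ _)
    have hpt : ∀ k ℓ : Fin (m+1), (if ℓ < k then mergeLast P 0 1 k ℓ else 0)
        ≤ (if ℓ < k then P 0 1 k.castSucc ℓ.castSucc else 0)
          + (if (ℓ:ℕ) = 0 then P 0 1 k.castSucc (Fin.last (m+1)) else 0) := by
      intro k ℓ
      by_cases hkl : ℓ < k
      · have hk0 : ¬ (k:ℕ) = 0 := by have := Fin.lt_def.mp hkl; omega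
        simp [mergeLast, hkl, hk0]
      · simp only [if_neg hkl]
        exact add_nonneg le_rfl (ite_nonneg' (hpos _ _ _ _))
    calc (∑ k, ∑ ℓ, if ℓ < k then mergeLast P 0 1 k ℓ else 0)
        ≤ ∑ k : Fin (m+1), ∑ ℓ : Fin (m+1),
            ((if ℓ < k then P 0 1 k.castSucc ℓ.castSucc else 0)
              + (if (ℓ:ℕ) = 0 then P 0 1 k.castSucc (Fin.last (m+1)) else 0)) :=
          Finset.sum_le_sum fun k _ => Finset.sum_le_sum fun ℓ _ => hpt k ℓ
      _ = (∑ k : Fin (m+1), ∑ ℓ : Fin (m+1),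
            if ℓ < k then P 0 1 k.castSucc ℓ.castSucc else 0)
          + ∑ k : Fin (m+1), P 0 1 k.castSucc (Fin.last (m+1)) := by
          simp only [Finset.sum_add_distrib, Finset.sum_ite_irrel,
            Finset.sum_const_zero, sum_ite_val_zero]
      _ ≤ _ := add_le_add (lift_gt (P 0 1) (fun k ℓ => hpos _ _ _ _)) hext_col

set_option maxRecDepth 8000 in
lemma DQ_le {m : ℕ} {P : Fin 2 → Fin 2 → Fin (m+2) → Fin (m+2) → ℝ}
    (hpos : ∀ μ ν k ℓ, 0 ≤ P μ ν k ℓ) :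
    (∑ k, ∑ ℓ, if ℓ ≤ k then mergeLast P 1 0 k ℓ else 0)
      ≤ (∑ k, ∑ ℓ, if ℓ ≤ k then P 1 0 k ℓ else 0)
        + ((∑ ℓ : Fin (m+2), P 1 0 (Fin.last (m+1)) ℓ)
          + ((∑ k : Fin (m+2), P 1 0 k (Fin.last (m+1)))
            + P 1 0 (Fin.last (m+1)) (Fin.last (m+1)))) := by
    have hext_row : (∑ ℓ : Fin (m+1), P 1 0 (Fin.last (m+1)) ℓ.castSucc)
        ≤ ∑ ℓ : Fin (m+2), P 1 0 (Fin.last (m+1)) ℓ := by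
      rw [Fin.sum_univ_castSucc (f := fun ℓ => P 1 0 (Fin.last (m+1)) ℓ)]
      exact le_add_of_nonneg_right (hpos _ _ _ _)
    have hext_col : (∑ k : Fin (m+1), P 1 0 k.castSucc (Fin.last (m+1)))
        ≤ ∑ k : Fin (m+2), P 1 0 k (Fin.last (m+1)) := by
      rw [Fin.sum_univ_castSucc (f := fun k => P 1 0 k (Fin.last (m+1)))]
      exact le_add_of_nonneg_right (hpos _ _ _ _)
    have hpt : ∀ k ℓ : Fin (m+1), (if ℓ ≤ k then mergeLast P 1 0 k ℓ else 0)
        ≤ (if ℓ ≤ k then P 1 0 k.castSucc ℓ.castSucc else 0)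
          + ((if (k:ℕ) = 0 then P 1 0 (Fin.last (m+1)) ℓ.castSucc else 0)
            + ((if (ℓ:ℕ) = 0 then P 1 0 k.castSucc (Fin.last (m+1)) else 0)
              + (if (k:ℕ) = 0 ∧ (ℓ:ℕ) = 0
                  then P 1 0 (Fin.last (m+1)) (Fin.last (m+1)) else 0))) := by
      intro k ℓ
      by_cases hkl : ℓ ≤ k
      · simp only [mergeLast, if_pos hkl]
        exact le_of_eq (by ring)
      · simp only [if_neg hkl]
        exact add_nonneg le_rfl
          (add_nonneg (ite_nonneg' (hpos _ _ _ _))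
            (add_nonneg (ite_nonneg' (hpos _ _ _ _)) (ite_nonneg' (hpos _ _ _ _))))
    calc (∑ k, ∑ ℓ, if ℓ ≤ k then mergeLast P 1 0 k ℓ else 0)
        ≤ ∑ k : Fin (m+1), ∑ ℓ : Fin (m+1),
            ((if ℓ ≤ k then P 1 0 k.castSucc ℓ.castSucc else 0)
              + ((if (k:ℕ) = 0 then P 1 0 (Fin.last (m+1)) ℓ.castSucc else 0)
                + ((if (ℓ:ℕ) = 0 then P 1 0 k.castSucc (Fin.last (m+1)) else 0)
                  + (if (k:ℕ) = 0 ∧ (ℓ:ℕ) = 0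
                      then P 1 0 (Fin.last (m+1)) (Fin.last (m+1)) else 0)))) :=
          Finset.sum_le_sum fun k _ => Finset.sum_le_sum fun ℓ _ => hpt k ℓ
      _ = (∑ k : Fin (m+1), ∑ ℓ : Fin (m+1),
            if ℓ ≤ k then P 1 0 k.castSucc ℓ.castSucc else 0)
          + ((∑ ℓ : Fin (m+1), P 1 0 (Fin.last (m+1)) ℓ.castSucc)
            + ((∑ k : Fin (m+1), P 1 0 k.castSucc (Fin.last (m+1)))
              + P 1 0 (Fin.last (m+1)) (Fin.last (m+1)))) := by
          simp only [Finset.sum_add_distrib, ite_and, Finset.sum_ite_irrel,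
            Finset.sum_const_zero, sum_ite_val_zero]
      _ ≤ _ := add_le_add (lift_ge (P 1 0) (fun k ℓ => hpos _ _ _ _))
          (add_le_add hext_row (add_le_add hext_col le_rfl))

set_option maxRecDepth 8000 in
set_option maxHeartbeats 1000000 in
lemma mergeLast_ZG_le {m : ℕ} {P : Fin 2 → Fin 2 → Fin (m+2) → Fin (m+2) → ℝ}
    (hP : IsCorrelation (m+2) P) (hNS : NoSignaling (m+2) P) :
    ZG (mergeLast P) ≤ 11 * ZG P := by
  obtain ⟨hpos, -⟩ := hP
  have L : Fin (m+2) := Fin.last (m+1)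
  -- nonnegativity of the four ZG pieces of P
  have hA0 : 0 ≤ ∑ k, ∑ ℓ, if k < ℓ then P 1 1 k ℓ else 0 :=
    Finset.sum_nonneg fun k _ => Finset.sum_nonneg fun ℓ _ => ite_nonneg' (hpos _ _ _ _)
  have hB0 : 0 ≤ ∑ k, ∑ ℓ, if ℓ < k then P 0 1 k ℓ else 0 :=
    Finset.sum_nonneg fun k _ => Finset.sum_nonneg fun ℓ _ => ite_nonneg' (hpos _ _ _ _)
  have hC0 : 0 ≤ ∑ k, ∑ ℓ, if k < ℓ then P 0 0 k ℓ else 0 :=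
    Finset.sum_nonneg fun k _ => Finset.sum_nonneg fun ℓ _ => ite_nonneg' (hpos _ _ _ _)
  have hD0 : 0 ≤ ∑ k, ∑ ℓ, if ℓ ≤ k then P 1 0 k ℓ else 0 :=
    Finset.sum_nonneg fun k _ => Finset.sum_nonneg fun ℓ _ => ite_nonneg' (hpos _ _ _ _)
  -- X1 : last row of P 1 0 is at most D
  have hX1 : (∑ ℓ, P 1 0 (Fin.last (m+1)) ℓ)
      ≤ ∑ k, ∑ ℓ, if ℓ ≤ k then P 1 0 k ℓ else 0 := by
    have := row_le_double (fun k ℓ => if ℓ ≤ k then P 1 0 k ℓ else 0)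
      (fun k ℓ => ite_nonneg' (hpos _ _ _ _)) (Fin.last (m+1))
    simpa [Fin.le_last] using this
  have hX1' : (∑ ℓ, P 1 1 (Fin.last (m+1)) ℓ)
      ≤ ∑ k, ∑ ℓ, if ℓ ≤ k then P 1 0 k ℓ else 0 := by
    rw [← hNS.1 1 (Fin.last (m+1))]; exact hX1
  -- generic: the truncated last column is at most the (k<ℓ)-type double sum
  have hcastCol : ∀ Q : Fin (m+2) → Fin (m+2) → ℝ,
      (∑ k : Fin (m+1), Q k.castSucc (Fin.last (m+1)))
        = ∑ k : Fin (m+2), if k < Fin.last (m+1) then Q k (Fin.last (m+1)) else 0 := by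
    intro Q
    rw [Fin.sum_univ_castSucc
      (f := fun k : Fin (m+2) => if k < Fin.last (m+1) then Q k (Fin.last (m+1)) else 0)]
    simp [Fin.castSucc_lt_last]
  have hcastRow : ∀ Q : Fin (m+2) → Fin (m+2) → ℝ,
      (∑ ℓ : Fin (m+1), Q (Fin.last (m+1)) ℓ.castSucc)
        = ∑ ℓ : Fin (m+2), if ℓ < Fin.last (m+1) then Q (Fin.last (m+1)) ℓ else 0 := by
    intro Q
    rw [Fin.sum_univ_castSucc
      (f := fun ℓ : Fin (m+2) => if ℓ < Fin.last (m+1) then Q (Fin.last (m+1)) ℓ else 0)]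
    simp [Fin.castSucc_lt_last]
  -- X2 : last column of P 0 1
  have hX2 : (∑ k, P 0 1 k (Fin.last (m+1)))
      ≤ (∑ k, ∑ ℓ, if k < ℓ then P 1 1 k ℓ else 0)
        + ∑ k, ∑ ℓ, if ℓ ≤ k then P 1 0 k ℓ else 0 := by
    rw [hNS.2 1 (Fin.last (m+1))]
    calc ∑ k, P 1 1 k (Fin.last (m+1))
        = (∑ k : Fin (m+1), P 1 1 k.castSucc (Fin.last (m+1)))
          + P 1 1 (Fin.last (m+1)) (Fin.last (m+1)) :=
          Fin.sum_univ_castSucc (f := fun k => P 1 1 k (Fin.last (m+1)))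
      _ ≤ _ := by
          refine add_le_add ?_ ?_
          · rw [hcastCol (P 1 1)]
            exact col_le_double (fun k ℓ => if k < ℓ then P 1 1 k ℓ else 0)
              (fun k ℓ => ite_nonneg' (hpos _ _ _ _)) (Fin.last (m+1))
          · exact (entry_le_row (fun ℓ => P 1 1 (Fin.last (m+1)) ℓ)
              (fun ℓ => hpos _ _ _ _) (Fin.last (m+1))).trans hX1'
  -- X3 : last row of P 0 0
  have hX3 : (∑ ℓ, P 0 0 (Fin.last (m+1)) ℓ)
      ≤ (∑ k, ∑ ℓ, if ℓ < k then P 0 1 k ℓ else 0)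
        + ((∑ k, ∑ ℓ, if k < ℓ then P 1 1 k ℓ else 0)
          + ∑ k, ∑ ℓ, if ℓ ≤ k then P 1 0 k ℓ else 0) := by
    rw [hNS.1 0 (Fin.last (m+1))]
    calc ∑ ℓ, P 0 1 (Fin.last (m+1)) ℓ
        = (∑ ℓ : Fin (m+1), P 0 1 (Fin.last (m+1)) ℓ.castSucc)
          + P 0 1 (Fin.last (m+1)) (Fin.last (m+1)) :=
          Fin.sum_univ_castSucc (f := fun ℓ => P 0 1 (Fin.last (m+1)) ℓ)
      _ ≤ _ := by
          refine add_le_add ?_ ?_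
          · rw [hcastRow (P 0 1)]
            exact row_le_double (fun k ℓ => if ℓ < k then P 0 1 k ℓ else 0)
              (fun k ℓ => ite_nonneg' (hpos _ _ _ _)) (Fin.last (m+1))
          · exact (entry_le_row (fun k => P 0 1 k (Fin.last (m+1)))
              (fun k => hpos _ _ _ _) (Fin.last (m+1))).trans hX2
  -- X4 : last column of P 1 0
  have hX4 : (∑ k, P 1 0 k (Fin.last (m+1)))
      ≤ (∑ k, ∑ ℓ, if k < ℓ then P 0 0 k ℓ else 0)
        + ((∑ k, ∑ ℓ, if ℓ < k then P 0 1 k ℓ else 0)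
          + ((∑ k, ∑ ℓ, if k < ℓ then P 1 1 k ℓ else 0)
            + ∑ k, ∑ ℓ, if ℓ ≤ k then P 1 0 k ℓ else 0)) := by
    rw [← hNS.2 0 (Fin.last (m+1))]
    calc ∑ k, P 0 0 k (Fin.last (m+1))
        = (∑ k : Fin (m+1), P 0 0 k.castSucc (Fin.last (m+1)))
          + P 0 0 (Fin.last (m+1)) (Fin.last (m+1)) :=
          Fin.sum_univ_castSucc (f := fun k => P 0 0 k (Fin.last (m+1)))
      _ ≤ _ := by
          refine add_le_add ?_ ?_
          · rw [hcastCol (P 0 0)]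
            exact col_le_double (fun k ℓ => if k < ℓ then P 0 0 k ℓ else 0)
              (fun k ℓ => ite_nonneg' (hpos _ _ _ _)) (Fin.last (m+1))
          · exact (entry_le_row (fun ℓ => P 0 0 (Fin.last (m+1)) ℓ)
              (fun ℓ => hpos _ _ _ _) (Fin.last (m+1))).trans hX3
  have hPLLD : P 1 0 (Fin.last (m+1)) (Fin.last (m+1))
      ≤ ∑ ℓ, P 1 0 (Fin.last (m+1)) ℓ :=
    entry_le_row (fun ℓ => P 1 0 (Fin.last (m+1)) ℓ) (fun ℓ => hpos _ _ _ _)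
      (Fin.last (m+1))
  have hA1 := AQ_le hpos 1 1
  have hC1 := AQ_le hpos 0 0
  have hBQ := BQ_le (P := P) hpos
  have hDQ := DQ_le (P := P) hpos
  unfold ZG
  have hr11 : (∑ ℓ : Fin (m+2), P 1 1 (Fin.last (m+1)) ℓ)
      ≤ ∑ k, ∑ ℓ, if ℓ ≤ k then P 1 0 k ℓ else 0 := hX1'
  have hr00 := hX3
  linarith [hA1, hBQ, hC1, hDQ, hX1, hX2, hX3, hX4, hA0, hB0, hC0, hD0, hPLLD]
/-- Every no-signaling correlation with `r` outcomes satisfies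
`I'(P) ≥ 11^(1-r)`. -/
theorem noSignaling_ZG_ge_eleven_pow (r : ℕ)
    (P : Fin 2 → Fin 2 → Fin r → Fin r → ℝ)
    (hP : IsCorrelation r P) (hNS : NoSignaling r P) :
    (11 : ℝ) ^ (1 - (r : ℤ)) ≤ ZG P := by
  induction r with
  | zero => exact absurd (hP.2 0 0) (by simp)
  | succ n ih =>
    rcases n with _ | m
    · -- one outcome
      have h1 := hP.2 1 0
      simp at h1
      have hz : ZG P = P 1 0 0 0 := by
        simp [ZG, Fin.sum_univ_one]
      rw [hz, h1]
      norm_num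
    · -- at least two outcomes: merge and use the induction hypothesis
      have hQc := mergeLast_isCorrelation hP
      have hQn := mergeLast_noSignaling hNS
      have hZQ := ih (mergeLast P) hQc hQn
      have hkey := mergeLast_ZG_le hP hNS
      have e1 : (1 : ℤ) - ((m+1+1 : ℕ) : ℤ) = -(m:ℤ) - 1 := by push_cast; ring
      have e2 : (1 : ℤ) - ((m+1 : ℕ) : ℤ) = -(m:ℤ) := by push_cast; ring
      rw [e1]
      rw [e2] at hZQ
      have h11 : (11:ℝ) ^ (-(m:ℤ) - 1) * 11 = (11:ℝ) ^ (-(m:ℤ)) := by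
        rw [← zpow_add_one₀ (by norm_num : (11:ℝ) ≠ 0)]
        ring_nf
      linarith [hZQ, hkey, h11]
end
end

section
/- For every no-signaling correlation P with r ≥ 2 outcomes, the merged correlation P' satisfies I'(P') ≤ I'(P) + A_2(r) + B_2(r) + A_1(r) + B_1(r), where A_μ(r) is Alice's marginal probability of outcome r under setting μ and B_ν(r) is Bob's marginal probability of outcome r under setting ν. -/
open Matrix Kronecker BigOperators
open scoped ComplexOrder

noncomputable section

section MergeAux

variable {s : ℕ}

lemma big_lt_split (Q : Fin (s+2) → Fin (s+2) → ℝ) :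
    (∑ k : Fin (s+2), ∑ ℓ : Fin (s+2), if k < ℓ then Q k ℓ else 0)
      = (∑ k : Fin (s+1), ∑ ℓ : Fin (s+1), if k < ℓ then Q k.castSucc ℓ.castSucc else 0)
        + ∑ k : Fin (s+1), Q k.castSucc (Fin.last (s+1)) := by
  rw [Fin.sum_univ_castSucc (f := fun k : Fin (s+2) => ∑ ℓ, if k < ℓ then Q k ℓ else 0)]
  have h3 : (∑ ℓ : Fin (s+2), if Fin.last (s+1) < ℓ then Q (Fin.last (s+1)) ℓ else 0) = 0 :=
    Finset.sum_eq_zero fun ℓ _ => if_neg (Fin.le_last ℓ).not_gt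
  have h2 : ∀ k : Fin (s+1),
      (∑ ℓ : Fin (s+2), if k.castSucc < ℓ then Q k.castSucc ℓ else 0)
        = (∑ ℓ : Fin (s+1), if k < ℓ then Q k.castSucc ℓ.castSucc else 0)
          + Q k.castSucc (Fin.last (s+1)) := by
    intro k
    rw [Fin.sum_univ_castSucc (f := fun ℓ : Fin (s+2) => if k.castSucc < ℓ then Q k.castSucc ℓ else 0)]
    simp only [Fin.castSucc_lt_castSucc_iff, if_pos (Fin.castSucc_lt_last k)]
  simp only [h2, h3, Finset.sum_add_distrib]
  ring

lemma big_gt_split (Q : Fin (s+2) → Fin (s+2) → ℝ) :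
    (∑ k : Fin (s+2), ∑ ℓ : Fin (s+2), if ℓ < k then Q k ℓ else 0)
      = (∑ k : Fin (s+1), ∑ ℓ : Fin (s+1), if ℓ < k then Q k.castSucc ℓ.castSucc else 0)
        + ∑ ℓ : Fin (s+1), Q (Fin.last (s+1)) ℓ.castSucc := by
  rw [Fin.sum_univ_castSucc (f := fun k : Fin (s+2) => ∑ ℓ, if ℓ < k then Q k ℓ else 0)]
  have h3 : (∑ ℓ : Fin (s+2), if ℓ < Fin.last (s+1) then Q (Fin.last (s+1)) ℓ else 0)
      = (∑ ℓ : Fin (s+1), Q (Fin.last (s+1)) ℓ.castSucc) := by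
    rw [Fin.sum_univ_castSucc
      (f := fun ℓ : Fin (s+2) => if ℓ < Fin.last (s+1) then Q (Fin.last (s+1)) ℓ else 0)]
    rw [if_neg (lt_irrefl _), add_zero]
    exact Finset.sum_congr rfl fun ℓ _ => if_pos (Fin.castSucc_lt_last ℓ)
  have h2 : ∀ k : Fin (s+1),
      (∑ ℓ : Fin (s+2), if ℓ < k.castSucc then Q k.castSucc ℓ else 0)
        = (∑ ℓ : Fin (s+1), if ℓ < k then Q k.castSucc ℓ.castSucc else 0) := by
    intro k
    rw [Fin.sum_univ_castSucc (f := fun ℓ : Fin (s+2) => if ℓ < k.castSucc then Q k.castSucc ℓ else 0)]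
    simp only [Fin.castSucc_lt_castSucc_iff, if_neg (Fin.castSucc_lt_last k).asymm, add_zero]
  simp only [h2, h3]

lemma big_le_split (Q : Fin (s+2) → Fin (s+2) → ℝ) :
    (∑ k : Fin (s+2), ∑ ℓ : Fin (s+2), if ℓ ≤ k then Q k ℓ else 0)
      = (∑ k : Fin (s+1), ∑ ℓ : Fin (s+1), if ℓ ≤ k then Q k.castSucc ℓ.castSucc else 0)
        + ∑ ℓ : Fin (s+2), Q (Fin.last (s+1)) ℓ := by
  rw [Fin.sum_univ_castSucc (f := fun k : Fin (s+2) => ∑ ℓ, if ℓ ≤ k then Q k ℓ else 0)]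
  have h3 : (∑ ℓ : Fin (s+2), if ℓ ≤ Fin.last (s+1) then Q (Fin.last (s+1)) ℓ else 0)
      = ∑ ℓ : Fin (s+2), Q (Fin.last (s+1)) ℓ :=
    Finset.sum_congr rfl fun ℓ _ => if_pos (Fin.le_last ℓ)
  have h2 : ∀ k : Fin (s+1),
      (∑ ℓ : Fin (s+2), if ℓ ≤ k.castSucc then Q k.castSucc ℓ else 0)
        = (∑ ℓ : Fin (s+1), if ℓ ≤ k then Q k.castSucc ℓ.castSucc else 0) := by
    intro k
    rw [Fin.sum_univ_castSucc (f := fun ℓ : Fin (s+2) => if ℓ ≤ k.castSucc then Q k.castSucc ℓ else 0)]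
    simp only [Fin.castSucc_le_castSucc_iff, if_neg (Fin.castSucc_lt_last k).not_ge, add_zero]
  simp only [h2, h3]

lemma ite_le_ite' {c1 c2 : Prop} [Decidable c1] [Decidable c2] {x : ℝ} (h : c1 → c2) (hx : 0 ≤ x) :
    (if c1 then x else 0) ≤ (if c2 then x else 0) := by
  split_ifs <;> first | exact le_rfl | exact hx | exact absurd (h ‹_›) ‹_›

lemma sum_castSucc_le (g : Fin (s+2) → ℝ) (hg : ∀ i, 0 ≤ g i) :
    (∑ i : Fin (s+1), g i.castSucc) ≤ ∑ i : Fin (s+2), g i := by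
  conv_rhs => rw [Fin.sum_univ_castSucc]
  exact le_add_of_nonneg_right (hg _)

lemma sum_fst_zero_le (c : Fin (s+1) → Fin (s+1) → Prop) [∀ k ℓ, Decidable (c k ℓ)]
    (g : Fin (s+1) → ℝ) (hg : ∀ i, 0 ≤ g i) :
    (∑ k : Fin (s+1), ∑ ℓ : Fin (s+1), if c k ℓ ∧ (k:ℕ) = 0 then g ℓ else 0) ≤ ∑ ℓ, g ℓ := by
  rw [Fin.sum_univ_succ]
  have h0 : ∀ k : Fin s,
      (∑ ℓ : Fin (s+1), if c (Fin.succ k) ℓ ∧ ((Fin.succ k : Fin (s+1)):ℕ) = 0 then g ℓ else 0) = 0 :=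
    fun k => Finset.sum_eq_zero fun ℓ _ => if_neg (by simp [Fin.val_succ])
  simp only [h0, Finset.sum_const_zero, add_zero]
  exact Finset.sum_le_sum fun ℓ _ => by split_ifs <;> [exact le_rfl; exact hg ℓ]

lemma sum_snd_zero_le (c : Fin (s+1) → Fin (s+1) → Prop) [∀ k ℓ, Decidable (c k ℓ)]
    (g : Fin (s+1) → ℝ) (hg : ∀ i, 0 ≤ g i) :
    (∑ k : Fin (s+1), ∑ ℓ : Fin (s+1), if c k ℓ ∧ (ℓ:ℕ) = 0 then g k else 0) ≤ ∑ k, g k := by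
  rw [Finset.sum_comm]
  exact sum_fst_zero_le (fun ℓ k => c k ℓ) g hg

lemma sum_ite_zero_zero (f : Fin (s+1) → Fin (s+1) → ℝ) :
    (∑ k : Fin (s+1), ∑ ℓ : Fin (s+1), if (k:ℕ) = 0 ∧ (ℓ:ℕ) = 0 then f k ℓ else 0) = f 0 0 := by
  simp [Fin.sum_univ_succ]

lemma merge_lt_le (Q : Fin (s+2) → Fin (s+2) → ℝ) (hQ : ∀ k ℓ, 0 ≤ Q k ℓ)
    (M : Fin (s+1) → Fin (s+1) → ℝ)
    (hM : ∀ k ℓ, M k ℓ = Q k.castSucc ℓ.castSucc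
      + (if (k:ℕ) = 0 then Q (Fin.last (s+1)) ℓ.castSucc else 0)
      + (if (ℓ:ℕ) = 0 then Q k.castSucc (Fin.last (s+1)) else 0)
      + (if (k:ℕ) = 0 ∧ (ℓ:ℕ) = 0 then Q (Fin.last (s+1)) (Fin.last (s+1)) else 0)) :
    (∑ k : Fin (s+1), ∑ ℓ : Fin (s+1), if k < ℓ then M k ℓ else 0)
      ≤ (∑ k : Fin (s+2), ∑ ℓ : Fin (s+2), if k < ℓ then Q k ℓ else 0)
        + ∑ ℓ : Fin (s+2), Q (Fin.last (s+1)) ℓ := by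
  have hexp : ∀ k ℓ : Fin (s+1), (if k < ℓ then M k ℓ else 0)
      = (if k < ℓ then Q k.castSucc ℓ.castSucc else 0)
        + (if k < ℓ ∧ (k:ℕ) = 0 then Q (Fin.last (s+1)) ℓ.castSucc else 0)
        + (if k < ℓ ∧ (ℓ:ℕ) = 0 then Q k.castSucc (Fin.last (s+1)) else 0)
        + (if k < ℓ ∧ ((k:ℕ) = 0 ∧ (ℓ:ℕ) = 0) then Q (Fin.last (s+1)) (Fin.last (s+1)) else 0) := by
    intro k ℓ; rw [hM]; by_cases h : k < ℓ <;> simp [h]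
  simp only [hexp, Finset.sum_add_distrib]
  have hT1 : (∑ k : Fin (s+1), ∑ ℓ : Fin (s+1), if k < ℓ then Q k.castSucc ℓ.castSucc else 0)
      ≤ ∑ k : Fin (s+2), ∑ ℓ : Fin (s+2), if k < ℓ then Q k ℓ else 0 := by
    rw [big_lt_split]
    exact le_add_of_nonneg_right (Finset.sum_nonneg fun k _ => hQ _ _)
  have hT2 : (∑ k : Fin (s+1), ∑ ℓ : Fin (s+1),
        if k < ℓ ∧ (k:ℕ) = 0 then Q (Fin.last (s+1)) ℓ.castSucc else 0)
      ≤ ∑ ℓ : Fin (s+2), Q (Fin.last (s+1)) ℓ :=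
    (sum_fst_zero_le (fun k ℓ => k < ℓ) (fun ℓ => Q (Fin.last (s+1)) ℓ.castSucc)
      (fun _ => hQ _ _)).trans (sum_castSucc_le _ (fun _ => hQ _ _))
  have hT3 : (∑ k : Fin (s+1), ∑ ℓ : Fin (s+1),
        if k < ℓ ∧ (ℓ:ℕ) = 0 then Q k.castSucc (Fin.last (s+1)) else 0) = 0 :=
    Finset.sum_eq_zero fun k _ => Finset.sum_eq_zero fun ℓ _ => if_neg (by
      rintro ⟨h1, h2⟩; rw [Fin.lt_def, h2] at h1; omega)
  have hT4 : (∑ k : Fin (s+1), ∑ ℓ : Fin (s+1),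
        if k < ℓ ∧ ((k:ℕ) = 0 ∧ (ℓ:ℕ) = 0) then Q (Fin.last (s+1)) (Fin.last (s+1)) else 0) = 0 :=
    Finset.sum_eq_zero fun k _ => Finset.sum_eq_zero fun ℓ _ => if_neg (by
      rintro ⟨h1, _, h2⟩; rw [Fin.lt_def, h2] at h1; omega)
  linarith

lemma merge_gt_le (Q : Fin (s+2) → Fin (s+2) → ℝ) (hQ : ∀ k ℓ, 0 ≤ Q k ℓ)
    (M : Fin (s+1) → Fin (s+1) → ℝ)
    (hM : ∀ k ℓ, M k ℓ = Q k.castSucc ℓ.castSucc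
      + (if (k:ℕ) = 0 then Q (Fin.last (s+1)) ℓ.castSucc else 0)
      + (if (ℓ:ℕ) = 0 then Q k.castSucc (Fin.last (s+1)) else 0)
      + (if (k:ℕ) = 0 ∧ (ℓ:ℕ) = 0 then Q (Fin.last (s+1)) (Fin.last (s+1)) else 0)) :
    (∑ k : Fin (s+1), ∑ ℓ : Fin (s+1), if ℓ < k then M k ℓ else 0)
      ≤ (∑ k : Fin (s+2), ∑ ℓ : Fin (s+2), if ℓ < k then Q k ℓ else 0)
        + ∑ k : Fin (s+2), Q k (Fin.last (s+1)) := by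
  have hexp : ∀ k ℓ : Fin (s+1), (if ℓ < k then M k ℓ else 0)
      = (if ℓ < k then Q k.castSucc ℓ.castSucc else 0)
        + (if ℓ < k ∧ (k:ℕ) = 0 then Q (Fin.last (s+1)) ℓ.castSucc else 0)
        + (if ℓ < k ∧ (ℓ:ℕ) = 0 then Q k.castSucc (Fin.last (s+1)) else 0)
        + (if ℓ < k ∧ ((k:ℕ) = 0 ∧ (ℓ:ℕ) = 0) then Q (Fin.last (s+1)) (Fin.last (s+1)) else 0) := by
    intro k ℓ; rw [hM]; by_cases h : ℓ < k <;> simp [h]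
  simp only [hexp, Finset.sum_add_distrib]
  have hT1 : (∑ k : Fin (s+1), ∑ ℓ : Fin (s+1), if ℓ < k then Q k.castSucc ℓ.castSucc else 0)
      ≤ ∑ k : Fin (s+2), ∑ ℓ : Fin (s+2), if ℓ < k then Q k ℓ else 0 := by
    rw [big_gt_split]
    exact le_add_of_nonneg_right (Finset.sum_nonneg fun k _ => hQ _ _)
  have hT2 : (∑ k : Fin (s+1), ∑ ℓ : Fin (s+1),
        if ℓ < k ∧ (k:ℕ) = 0 then Q (Fin.last (s+1)) ℓ.castSucc else 0) = 0 :=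
    Finset.sum_eq_zero fun k _ => Finset.sum_eq_zero fun ℓ _ => if_neg (by
      rintro ⟨h1, h2⟩; rw [Fin.lt_def, h2] at h1; omega)
  have hT3 : (∑ k : Fin (s+1), ∑ ℓ : Fin (s+1),
        if ℓ < k ∧ (ℓ:ℕ) = 0 then Q k.castSucc (Fin.last (s+1)) else 0)
      ≤ ∑ k : Fin (s+2), Q k (Fin.last (s+1)) :=
    (sum_snd_zero_le (fun k ℓ => ℓ < k) (fun k => Q k.castSucc (Fin.last (s+1)))
      (fun _ => hQ _ _)).trans (sum_castSucc_le (fun k => Q k (Fin.last (s+1))) (fun _ => hQ _ _))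
  have hT4 : (∑ k : Fin (s+1), ∑ ℓ : Fin (s+1),
        if ℓ < k ∧ ((k:ℕ) = 0 ∧ (ℓ:ℕ) = 0) then Q (Fin.last (s+1)) (Fin.last (s+1)) else 0) = 0 :=
    Finset.sum_eq_zero fun k _ => Finset.sum_eq_zero fun ℓ _ => if_neg (by
      rintro ⟨h1, h2, _⟩; rw [Fin.lt_def, h2] at h1; omega)
  linarith

lemma merge_le_le (Q : Fin (s+2) → Fin (s+2) → ℝ) (hQ : ∀ k ℓ, 0 ≤ Q k ℓ)
    (M : Fin (s+1) → Fin (s+1) → ℝ)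
    (hM : ∀ k ℓ, M k ℓ = Q k.castSucc ℓ.castSucc
      + (if (k:ℕ) = 0 then Q (Fin.last (s+1)) ℓ.castSucc else 0)
      + (if (ℓ:ℕ) = 0 then Q k.castSucc (Fin.last (s+1)) else 0)
      + (if (k:ℕ) = 0 ∧ (ℓ:ℕ) = 0 then Q (Fin.last (s+1)) (Fin.last (s+1)) else 0)) :
    (∑ k : Fin (s+1), ∑ ℓ : Fin (s+1), if ℓ ≤ k then M k ℓ else 0)
      ≤ (∑ k : Fin (s+2), ∑ ℓ : Fin (s+2), if ℓ ≤ k then Q k ℓ else 0)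
        + ∑ k : Fin (s+2), Q k (Fin.last (s+1)) := by
  have hexp : ∀ k ℓ : Fin (s+1), (if ℓ ≤ k then M k ℓ else 0)
      = (if ℓ ≤ k then Q k.castSucc ℓ.castSucc else 0)
        + (if ℓ ≤ k ∧ (k:ℕ) = 0 then Q (Fin.last (s+1)) ℓ.castSucc else 0)
        + (if ℓ ≤ k ∧ (ℓ:ℕ) = 0 then Q k.castSucc (Fin.last (s+1)) else 0)
        + (if ℓ ≤ k ∧ ((k:ℕ) = 0 ∧ (ℓ:ℕ) = 0) then Q (Fin.last (s+1)) (Fin.last (s+1)) else 0) := by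
    intro k ℓ; rw [hM]; by_cases h : ℓ ≤ k <;> simp [h]
  simp only [hexp, Finset.sum_add_distrib]
  rw [big_le_split]
  have hT2 : (∑ k : Fin (s+1), ∑ ℓ : Fin (s+1),
        if ℓ ≤ k ∧ (k:ℕ) = 0 then Q (Fin.last (s+1)) ℓ.castSucc else 0)
      ≤ Q (Fin.last (s+1)) ((0 : Fin (s+1)).castSucc) := by
    have : ∀ k ℓ : Fin (s+1),
        (if ℓ ≤ k ∧ (k:ℕ) = 0 then Q (Fin.last (s+1)) ℓ.castSucc else 0)
          ≤ (if (k:ℕ) = 0 ∧ (ℓ:ℕ) = 0 then Q (Fin.last (s+1)) ℓ.castSucc else 0) := by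
      intro k ℓ
      refine ite_le_ite' (fun h => ⟨h.2, ?_⟩) (hQ _ _)
      have := Fin.le_def.mp h.1
      omega
    calc (∑ k : Fin (s+1), ∑ ℓ : Fin (s+1),
          if ℓ ≤ k ∧ (k:ℕ) = 0 then Q (Fin.last (s+1)) ℓ.castSucc else 0)
        ≤ ∑ k : Fin (s+1), ∑ ℓ : Fin (s+1),
            if (k:ℕ) = 0 ∧ (ℓ:ℕ) = 0 then Q (Fin.last (s+1)) ℓ.castSucc else 0 :=
          Finset.sum_le_sum fun k _ => Finset.sum_le_sum fun ℓ _ => this k ℓ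
      _ = Q (Fin.last (s+1)) ((0 : Fin (s+1)).castSucc) :=
          sum_ite_zero_zero (fun k ℓ => Q (Fin.last (s+1)) ℓ.castSucc)
  have hT4 : (∑ k : Fin (s+1), ∑ ℓ : Fin (s+1),
        if ℓ ≤ k ∧ ((k:ℕ) = 0 ∧ (ℓ:ℕ) = 0) then Q (Fin.last (s+1)) (Fin.last (s+1)) else 0)
      ≤ Q (Fin.last (s+1)) (Fin.last (s+1)) := by
    have : ∀ k ℓ : Fin (s+1),
        (if ℓ ≤ k ∧ ((k:ℕ) = 0 ∧ (ℓ:ℕ) = 0) then Q (Fin.last (s+1)) (Fin.last (s+1)) else 0)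
          ≤ (if (k:ℕ) = 0 ∧ (ℓ:ℕ) = 0 then Q (Fin.last (s+1)) (Fin.last (s+1)) else 0) :=
      fun k ℓ => ite_le_ite' (fun h => h.2) (hQ _ _)
    calc (∑ k : Fin (s+1), ∑ ℓ : Fin (s+1),
          if ℓ ≤ k ∧ ((k:ℕ) = 0 ∧ (ℓ:ℕ) = 0) then Q (Fin.last (s+1)) (Fin.last (s+1)) else 0)
        ≤ ∑ k : Fin (s+1), ∑ ℓ : Fin (s+1),
            if (k:ℕ) = 0 ∧ (ℓ:ℕ) = 0 then Q (Fin.last (s+1)) (Fin.last (s+1)) else 0 :=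
          Finset.sum_le_sum fun k _ => Finset.sum_le_sum fun ℓ _ => this k ℓ
      _ = Q (Fin.last (s+1)) (Fin.last (s+1)) :=
          sum_ite_zero_zero (fun _ _ => Q (Fin.last (s+1)) (Fin.last (s+1)))
  have hT3 : (∑ k : Fin (s+1), ∑ ℓ : Fin (s+1),
        if ℓ ≤ k ∧ (ℓ:ℕ) = 0 then Q k.castSucc (Fin.last (s+1)) else 0)
      ≤ ∑ k : Fin (s+2), Q k (Fin.last (s+1)) :=
    (sum_snd_zero_le (fun k ℓ => ℓ ≤ k) (fun k => Q k.castSucc (Fin.last (s+1)))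
      (fun _ => hQ _ _)).trans (sum_castSucc_le (fun k => Q k (Fin.last (s+1))) (fun _ => hQ _ _))
  have hrow : Q (Fin.last (s+1)) ((0 : Fin (s+1)).castSucc) + Q (Fin.last (s+1)) (Fin.last (s+1))
      ≤ ∑ ℓ : Fin (s+2), Q (Fin.last (s+1)) ℓ := by
    conv_rhs => rw [Fin.sum_univ_castSucc]
    have : Q (Fin.last (s+1)) ((0 : Fin (s+1)).castSucc)
        ≤ ∑ ℓ : Fin (s+1), Q (Fin.last (s+1)) ℓ.castSucc :=
      Finset.single_le_sum (f := fun ℓ : Fin (s+1) => Q (Fin.last (s+1)) ℓ.castSucc)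
        (fun i _ => hQ _ _) (Finset.mem_univ (0 : Fin (s+1)))
    linarith
  linarith

end MergeAux

/-- For every no-signaling correlation `P` with `r+1 ≥ 2` outcomes,
the merged correlation `P'` satisfies
`I'(P') ≤ I'(P) + A₂ + B₂ + A₁ + B₁`, where `A_μ` is Alice's marginal probability of
the last outcome under setting `μ` and `B_ν` is Bob's marginal probability of the
last outcome under setting `ν` (settings `1, 2` are indices `0, 1`). -/
theorem ZG_mergeLast_le (r : ℕ) (hr : 1 ≤ r)
    (P : Fin 2 → Fin 2 → Fin (r+1) → Fin (r+1) → ℝ)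
    (hP : IsCorrelation (r+1) P) (hNS : NoSignaling (r+1) P) :
    ZG (mergeLast P) ≤ ZG P
      + (∑ ℓ, P 1 0 (Fin.last r) ℓ)
      + (∑ k, P 0 1 k (Fin.last r))
      + (∑ ℓ, P 0 0 (Fin.last r) ℓ)
      + (∑ k, P 0 0 k (Fin.last r)) := by
  obtain ⟨s, rfl⟩ := Nat.exists_eq_add_of_le' hr
  simp only [ZG]
  have h11 := merge_lt_le (P 1 1) (fun k ℓ => hP.1 1 1 k ℓ)
    (fun k ℓ => mergeLast P 1 1 k ℓ) (fun k ℓ => rfl)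
  have h01 := merge_gt_le (P 0 1) (fun k ℓ => hP.1 0 1 k ℓ)
    (fun k ℓ => mergeLast P 0 1 k ℓ) (fun k ℓ => rfl)
  have h00 := merge_lt_le (P 0 0) (fun k ℓ => hP.1 0 0 k ℓ)
    (fun k ℓ => mergeLast P 0 0 k ℓ) (fun k ℓ => rfl)
  have h10 := merge_le_le (P 1 0) (fun k ℓ => hP.1 1 0 k ℓ)
    (fun k ℓ => mergeLast P 1 0 k ℓ) (fun k ℓ => rfl)
  have e1 : (∑ ℓ, P 1 1 (Fin.last (s+1)) ℓ) = ∑ ℓ, P 1 0 (Fin.last (s+1)) ℓ :=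
    (hNS.1 1 (Fin.last (s+1))).symm
  have e2 : (∑ k, P 1 0 k (Fin.last (s+1))) = ∑ k, P 0 0 k (Fin.last (s+1)) :=
    (hNS.2 0 (Fin.last (s+1))).symm
  linarith
end
end

section
/- For every no-signaling correlation P with r outcomes, the marginal probabilities of the last outcome are bounded by the Zohren–Gill expression: A_2(r) ≤ I'(P), B_2(r) ≤ 2·I'(P), A_1(r) ≤ 3·I'(P), and B_1(r) ≤ 4·I'(P), where A_μ(r) is Alice's marginal probability of outcome r under setting μ and B_ν(r) is Bob's marginal probability of outcome r under setting ν. -/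
open Matrix Kronecker BigOperators
open scoped ComplexOrder

noncomputable section

lemma zg_row_le_sum {n : ℕ} (g : Fin n → Fin n → ℝ) (hg : ∀ k ℓ, 0 ≤ g k ℓ) (k0 : Fin n) :
    ∑ ℓ, g k0 ℓ ≤ ∑ k, ∑ ℓ, g k ℓ :=
  Finset.single_le_sum (fun k _ => Finset.sum_nonneg fun ℓ _ => hg k ℓ) (Finset.mem_univ k0)

lemma zg_col_le_sum {n : ℕ} (g : Fin n → Fin n → ℝ) (hg : ∀ k ℓ, 0 ≤ g k ℓ) (ℓ0 : Fin n) :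
    ∑ k, g k ℓ0 ≤ ∑ k, ∑ ℓ, g k ℓ :=
  Finset.sum_le_sum fun k _ => Finset.single_le_sum (fun ℓ _ => hg k ℓ) (Finset.mem_univ ℓ0)

lemma zg_split_last {r : ℕ} (f : Fin (r+1) → ℝ) :
    ∑ k, f k = f (Fin.last r) + ∑ k, if k < Fin.last r then f k else 0 := by
  rw [Fin.sum_univ_castSucc, Fin.sum_univ_castSucc (f := fun k => if k < Fin.last r then f k else 0)]
  simp [Fin.castSucc_lt_last]
  ring

/-- For every no-signaling correlation `P` with `r+1` outcomes,
the marginal probabilities of the last outcome are bounded by `I'`: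
`A₂ ≤ I'(P)`, `B₂ ≤ 2·I'(P)`, `A₁ ≤ 3·I'(P)`, `B₁ ≤ 4·I'(P)`, where `A_μ` is Alice's
marginal of the last outcome under setting `μ` and `B_ν` is Bob's marginal of the
last outcome under setting `ν` (settings `1, 2` are indices `0, 1`). -/
theorem marginals_last_le_ZG (r : ℕ)
    (P : Fin 2 → Fin 2 → Fin (r+1) → Fin (r+1) → ℝ)
    (hP : IsCorrelation (r+1) P) (hNS : NoSignaling (r+1) P) :
    (∑ ℓ, P 1 0 (Fin.last r) ℓ) ≤ ZG P ∧
    (∑ k, P 0 1 k (Fin.last r)) ≤ 2 * ZG P ∧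
    (∑ ℓ, P 0 0 (Fin.last r) ℓ) ≤ 3 * ZG P ∧
    (∑ k, P 0 0 k (Fin.last r)) ≤ 4 * ZG P := by
  obtain ⟨hpos, hsum⟩ := hP
  obtain ⟨hA, hB⟩ := hNS
  set S1 := ∑ k, ∑ ℓ, if k < ℓ then P 1 1 k ℓ else 0 with hS1
  set S2 := ∑ k, ∑ ℓ, if ℓ < k then P 0 1 k ℓ else 0 with hS2
  set S3 := ∑ k, ∑ ℓ, if k < ℓ then P 0 0 k ℓ else 0 with hS3
  set S4 := ∑ k, ∑ ℓ, if ℓ ≤ k then P 1 0 k ℓ else 0 with hS4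
  have hZG : ZG P = S1 + S2 + S3 + S4 := rfl
  have h1nn : (0:ℝ) ≤ S1 := Finset.sum_nonneg fun k _ => Finset.sum_nonneg fun ℓ _ => by
    split <;> [exact hpos 1 1 k ℓ; rfl]
  have h2nn : (0:ℝ) ≤ S2 := Finset.sum_nonneg fun k _ => Finset.sum_nonneg fun ℓ _ => by
    split <;> [exact hpos 0 1 k ℓ; rfl]
  have h3nn : (0:ℝ) ≤ S3 := Finset.sum_nonneg fun k _ => Finset.sum_nonneg fun ℓ _ => by
    split <;> [exact hpos 0 0 k ℓ; rfl]
  have h4nn : (0:ℝ) ≤ S4 := Finset.sum_nonneg fun k _ => Finset.sum_nonneg fun ℓ _ => by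
    split <;> [exact hpos 1 0 k ℓ; rfl]
  -- A₂ ≤ S4
  have hA2 : (∑ ℓ, P 1 0 (Fin.last r) ℓ) ≤ S4 := by
    have e : (∑ ℓ, P 1 0 (Fin.last r) ℓ)
        = ∑ ℓ, if ℓ ≤ Fin.last r then P 1 0 (Fin.last r) ℓ else 0 := by
      simp [Fin.le_last]
    rw [e, hS4]
    exact zg_row_le_sum (fun k ℓ => if ℓ ≤ k then P 1 0 k ℓ else 0)
      (fun k ℓ => by split <;> [exact hpos 1 0 k ℓ; rfl]) (Fin.last r)
  -- B₂ ≤ A₂ + S1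
  have hdiag11 : P 1 1 (Fin.last r) (Fin.last r) ≤ ∑ ℓ, P 1 0 (Fin.last r) ℓ := by
    rw [hA 1 (Fin.last r)]
    exact Finset.single_le_sum (fun ℓ _ => hpos 1 1 (Fin.last r) ℓ) (Finset.mem_univ _)
  have hB2 : (∑ k, P 0 1 k (Fin.last r)) ≤ S4 + S1 := by
    have e1 : (∑ k, P 0 1 k (Fin.last r)) = ∑ k, P 1 1 k (Fin.last r) := hB 1 (Fin.last r)
    have e2 := zg_split_last (fun k => P 1 1 k (Fin.last r))
    have e3 : (∑ k, if k < Fin.last r then P 1 1 k (Fin.last r) else 0) ≤ S1 := by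
      rw [hS1]
      exact zg_col_le_sum (fun k ℓ => if k < ℓ then P 1 1 k ℓ else 0)
        (fun k ℓ => by split <;> [exact hpos 1 1 k ℓ; rfl]) (Fin.last r)
    rw [e1, e2]
    linarith
  -- A₁ ≤ B₂ + S2
  have hdiag01 : P 0 1 (Fin.last r) (Fin.last r) ≤ ∑ k, P 0 1 k (Fin.last r) :=
    Finset.single_le_sum (fun k _ => hpos 0 1 k (Fin.last r)) (Finset.mem_univ _)
  have hA1 : (∑ ℓ, P 0 0 (Fin.last r) ℓ) ≤ S4 + S1 + S2 := by
    have e1 : (∑ ℓ, P 0 0 (Fin.last r) ℓ) = ∑ ℓ, P 0 1 (Fin.last r) ℓ := hA 0 (Fin.last r)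
    have e2 := zg_split_last (fun ℓ => P 0 1 (Fin.last r) ℓ)
    have e3 : (∑ ℓ, if ℓ < Fin.last r then P 0 1 (Fin.last r) ℓ else 0) ≤ S2 := by
      rw [hS2]
      exact zg_row_le_sum (fun k ℓ => if ℓ < k then P 0 1 k ℓ else 0)
        (fun k ℓ => by split <;> [exact hpos 0 1 k ℓ; rfl]) (Fin.last r)
    rw [e1, e2]
    linarith
  -- B₁ ≤ A₁ + S3
  have hdiag00 : P 0 0 (Fin.last r) (Fin.last r) ≤ ∑ ℓ, P 0 0 (Fin.last r) ℓ :=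
    Finset.single_le_sum (fun ℓ _ => hpos 0 0 (Fin.last r) ℓ) (Finset.mem_univ _)
  have hB1 : (∑ k, P 0 0 k (Fin.last r)) ≤ S4 + S1 + S2 + S3 := by
    have e2 := zg_split_last (fun k => P 0 0 k (Fin.last r))
    have e3 : (∑ k, if k < Fin.last r then P 0 0 k (Fin.last r) else 0) ≤ S3 := by
      rw [hS3]
      exact zg_col_le_sum (fun k ℓ => if k < ℓ then P 0 0 k ℓ else 0)
        (fun k ℓ => by split <;> [exact hpos 0 0 k ℓ; rfl]) (Fin.last r)
    rw [e2]
    linarith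
  rw [hZG]
  refine ⟨by linarith, by linarith, by linarith, by linarith⟩
end
end

section
/- For every no-signaling correlation P with r ≥ 2 outcomes, the merged correlation P' obtained by identifying outcome r with outcome 1 on both parties satisfies I'(P') ≤ 11·I'(P). -/
open Matrix Kronecker BigOperators
open scoped ComplexOrder

noncomputable section

lemma zg_sum_castSucc_le {r : ℕ} (f : Fin (r+1) → ℝ) (hf : ∀ i, 0 ≤ f i) :
    ∑ i : Fin r, f i.castSucc ≤ ∑ i, f i := by
  rw [Fin.sum_univ_castSucc]; linarith [hf (Fin.last r)]

lemma zg_sum2_castSucc_le {r : ℕ} (f : Fin (r+1) → Fin (r+1) → ℝ)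
    (hf : ∀ i j, 0 ≤ f i j) :
    ∑ i : Fin r, ∑ j : Fin r, f i.castSucc j.castSucc ≤ ∑ i, ∑ j, f i j := by
  calc ∑ i : Fin r, ∑ j : Fin r, f i.castSucc j.castSucc
      ≤ ∑ i : Fin r, ∑ j, f i.castSucc j :=
        Finset.sum_le_sum fun i _ => zg_sum_castSucc_le _ (fun j => hf _ j)
    _ ≤ ∑ i, ∑ j, f i j :=
        zg_sum_castSucc_le (fun i => ∑ j, f i j)
          (fun i => Finset.sum_nonneg fun j _ => hf i j)

lemma zg_sum_ite_zero {r : ℕ} (hr : 1 ≤ r) (c : ℝ) :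
    ∑ k : Fin r, (if (k : ℕ) = 0 then c else 0) = c := by
  haveI : NeZero r := ⟨by omega⟩
  have h : ∀ k : Fin r, (if (k : ℕ) = 0 then c else 0) = if k = 0 then c else 0 := by
    intro k; simp only [Fin.val_eq_zero_iff]
  simp only [h]
  simp

lemma zg_ite_nonneg (p : Prop) [Decidable p] (c : ℝ) (hc : 0 ≤ c) :
    0 ≤ if p then c else 0 := by split <;> simp [hc]

/-- For every no-signaling correlation `P` with `r+1 ≥ 2` outcomes,
the merged correlation (identifying the last outcome with the first on both parties)
satisfies `I'(P') ≤ 11·I'(P)`. -/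
theorem ZG_mergeLast_le_eleven (r : ℕ) (hr : 1 ≤ r)
    (P : Fin 2 → Fin 2 → Fin (r+1) → Fin (r+1) → ℝ)
    (hP : IsCorrelation (r+1) P) (hNS : NoSignaling (r+1) P) :
    ZG (mergeLast P) ≤ 11 * ZG P := by
  obtain ⟨hpos, -⟩ := hP
  obtain ⟨hNSA, hNSB⟩ := hNS
  set A := (∑ k, ∑ ℓ, if k < ℓ then P 1 1 k ℓ else 0) with hA
  set B := (∑ k, ∑ ℓ, if ℓ < k then P 0 1 k ℓ else 0) with hB
  set C := (∑ k, ∑ ℓ, if k < ℓ then P 0 0 k ℓ else 0) with hC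
  set D := (∑ k, ∑ ℓ, if ℓ ≤ k then P 1 0 k ℓ else 0) with hD
  have hA0 : 0 ≤ A := by
    rw [hA]; exact Finset.sum_nonneg fun k _ => Finset.sum_nonneg fun ℓ _ =>
      zg_ite_nonneg _ _ (hpos 1 1 k ℓ)
  have hB0 : 0 ≤ B := by
    rw [hB]; exact Finset.sum_nonneg fun k _ => Finset.sum_nonneg fun ℓ _ =>
      zg_ite_nonneg _ _ (hpos 0 1 k ℓ)
  have hC0 : 0 ≤ C := by
    rw [hC]; exact Finset.sum_nonneg fun k _ => Finset.sum_nonneg fun ℓ _ =>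
      zg_ite_nonneg _ _ (hpos 0 0 k ℓ)
  have hD0 : 0 ≤ D := by
    rw [hD]; exact Finset.sum_nonneg fun k _ => Finset.sum_nonneg fun ℓ _ =>
      zg_ite_nonneg _ _ (hpos 1 0 k ℓ)
  -- row/column sums through the last outcome
  have hrow10 : (∑ ℓ, P 1 0 (Fin.last r) ℓ) ≤ D := by
    rw [hD]
    have h := Finset.single_le_sum
      (f := fun k => ∑ ℓ, if ℓ ≤ k then P 1 0 k ℓ else 0)
      (fun i _ => Finset.sum_nonneg fun ℓ _ => zg_ite_nonneg _ _ (hpos 1 0 i ℓ))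
      (Finset.mem_univ (Fin.last r))
    simpa [Fin.le_last] using h
  have hrow11 : (∑ ℓ, P 1 1 (Fin.last r) ℓ) ≤ D := by
    rw [← hNSA 1 (Fin.last r)]; exact hrow10
  have hdiag11 : P 1 1 (Fin.last r) (Fin.last r) ≤ ∑ ℓ, P 1 1 (Fin.last r) ℓ :=
    Finset.single_le_sum (f := fun ℓ => P 1 1 (Fin.last r) ℓ)
      (fun i _ => hpos 1 1 (Fin.last r) i) (Finset.mem_univ (Fin.last r))
  have hcol11 : (∑ k, P 1 1 k (Fin.last r)) ≤ A + P 1 1 (Fin.last r) (Fin.last r) := by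
    rw [Fin.sum_univ_castSucc]
    have hmain : (∑ k : Fin r, P 1 1 k.castSucc (Fin.last r)) ≤ A := by
      rw [hA]
      have h1 : ∀ k : Fin r, P 1 1 k.castSucc (Fin.last r) ≤
          ∑ ℓ, (if k.castSucc < ℓ then P 1 1 k.castSucc ℓ else 0) := by
        intro k
        have h := Finset.single_le_sum
          (f := fun ℓ => if k.castSucc < ℓ then P 1 1 k.castSucc ℓ else 0)
          (fun i _ => zg_ite_nonneg _ _ (hpos 1 1 k.castSucc i)) (Finset.mem_univ (Fin.last r))
        simpa [Fin.castSucc_lt_last] using h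
      calc (∑ k : Fin r, P 1 1 k.castSucc (Fin.last r))
          ≤ ∑ k : Fin r, ∑ ℓ, (if k.castSucc < ℓ then P 1 1 k.castSucc ℓ else 0) :=
            Finset.sum_le_sum fun k _ => h1 k
        _ ≤ ∑ k, ∑ ℓ, (if k < ℓ then P 1 1 k ℓ else 0) :=
            zg_sum_castSucc_le (fun k => ∑ ℓ, if k < ℓ then P 1 1 k ℓ else 0)
              (fun k => Finset.sum_nonneg fun ℓ _ => zg_ite_nonneg _ _ (hpos 1 1 k ℓ))
    linarith
  have hcol01 : (∑ k, P 0 1 k (Fin.last r)) ≤ A + P 1 1 (Fin.last r) (Fin.last r) := by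
    rw [hNSB 1 (Fin.last r)]; exact hcol11
  have hdiag01 : P 0 1 (Fin.last r) (Fin.last r) ≤ ∑ k, P 0 1 k (Fin.last r) :=
    Finset.single_le_sum (f := fun k => P 0 1 k (Fin.last r))
      (fun i _ => hpos 0 1 i (Fin.last r)) (Finset.mem_univ (Fin.last r))
  have hrow01 : (∑ ℓ, P 0 1 (Fin.last r) ℓ) ≤ B + P 0 1 (Fin.last r) (Fin.last r) := by
    rw [Fin.sum_univ_castSucc]
    have hmain : (∑ ℓ : Fin r, P 0 1 (Fin.last r) ℓ.castSucc) ≤ B := by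
      rw [hB]
      have h := Finset.single_le_sum
        (f := fun k => ∑ ℓ, if ℓ < k then P 0 1 k ℓ else 0)
        (fun i _ => Finset.sum_nonneg fun ℓ _ => zg_ite_nonneg _ _ (hpos 0 1 i ℓ))
        (Finset.mem_univ (Fin.last r))
      have h2 : (∑ ℓ, if ℓ < (Fin.last r) then P 0 1 (Fin.last r) ℓ else 0) = ∑ ℓ : Fin r, P 0 1 (Fin.last r) ℓ.castSucc := by
        rw [Fin.sum_univ_castSucc]
        simp [Fin.castSucc_lt_last]
      rw [← h2]
      simpa using h
    linarith
  have hrow00 : (∑ ℓ, P 0 0 (Fin.last r) ℓ) ≤ B + P 0 1 (Fin.last r) (Fin.last r) := by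
    rw [hNSA 0 (Fin.last r)]; exact hrow01
  have hdiag00 : P 0 0 (Fin.last r) (Fin.last r) ≤ ∑ ℓ, P 0 0 (Fin.last r) ℓ :=
    Finset.single_le_sum (f := fun ℓ => P 0 0 (Fin.last r) ℓ)
      (fun i _ => hpos 0 0 (Fin.last r) i) (Finset.mem_univ (Fin.last r))
  have hcol00 : (∑ k, P 0 0 k (Fin.last r)) ≤ C + P 0 0 (Fin.last r) (Fin.last r) := by
    rw [Fin.sum_univ_castSucc]
    have hmain : (∑ k : Fin r, P 0 0 k.castSucc (Fin.last r)) ≤ C := by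
      rw [hC]
      have h1 : ∀ k : Fin r, P 0 0 k.castSucc (Fin.last r) ≤
          ∑ ℓ, (if k.castSucc < ℓ then P 0 0 k.castSucc ℓ else 0) := by
        intro k
        have h := Finset.single_le_sum
          (f := fun ℓ => if k.castSucc < ℓ then P 0 0 k.castSucc ℓ else 0)
          (fun i _ => zg_ite_nonneg _ _ (hpos 0 0 k.castSucc i)) (Finset.mem_univ (Fin.last r))
        simpa [Fin.castSucc_lt_last] using h
      calc (∑ k : Fin r, P 0 0 k.castSucc (Fin.last r))
          ≤ ∑ k : Fin r, ∑ ℓ, (if k.castSucc < ℓ then P 0 0 k.castSucc ℓ else 0) :=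
            Finset.sum_le_sum fun k _ => h1 k
        _ ≤ ∑ k, ∑ ℓ, (if k < ℓ then P 0 0 k ℓ else 0) :=
            zg_sum_castSucc_le (fun k => ∑ ℓ, if k < ℓ then P 0 0 k ℓ else 0)
              (fun k => Finset.sum_nonneg fun ℓ _ => zg_ite_nonneg _ _ (hpos 0 0 k ℓ))
    linarith
  have hcol10 : (∑ k, P 1 0 k (Fin.last r)) ≤ C + P 0 0 (Fin.last r) (Fin.last r) := by
    rw [← hNSB 0 (Fin.last r)]; exact hcol00
  have hdiag10 : P 1 0 (Fin.last r) (Fin.last r) ≤ ∑ ℓ, P 1 0 (Fin.last r) ℓ :=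
    Finset.single_le_sum (f := fun ℓ => P 1 0 (Fin.last r) ℓ)
      (fun i _ => hpos 1 0 (Fin.last r) i) (Finset.mem_univ (Fin.last r))

  -- Part 1 : the (1,1), k<ℓ block
  have part1 : (∑ k : Fin r, ∑ ℓ : Fin r, if k < ℓ then mergeLast P 1 1 k ℓ else 0)
      ≤ A + (∑ ℓ, P 1 1 (Fin.last r) ℓ) := by
    have step : ∀ k ℓ : Fin r, (if k < ℓ then mergeLast P 1 1 k ℓ else 0) ≤
        (if k < ℓ then P 1 1 k.castSucc ℓ.castSucc else 0)
        + (if (k:ℕ) = 0 then P 1 1 (Fin.last r) ℓ.castSucc else 0) := by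
      intro k ℓ
      by_cases h : k < ℓ
      · have hℓ : ¬ (ℓ:ℕ) = 0 := by have hh := Fin.lt_def.mp h; omega
        simp [mergeLast, h, hℓ]
      · rw [if_neg h, if_neg h]
        have := zg_ite_nonneg ((k:ℕ)=0) (P 1 1 (Fin.last r) ℓ.castSucc) (hpos 1 1 _ _)
        linarith
    have h1 : (∑ k : Fin r, ∑ ℓ : Fin r, if k < ℓ then P 1 1 k.castSucc ℓ.castSucc else 0) ≤ A := by
      rw [hA]
      have h := zg_sum2_castSucc_le (fun a b => if a < b then P 1 1 a b else 0)
        (fun a b => zg_ite_nonneg _ _ (hpos 1 1 a b))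
      simpa [Fin.castSucc_lt_castSucc_iff] using h
    have h2 : (∑ k : Fin r, ∑ ℓ : Fin r, if (k:ℕ) = 0 then P 1 1 (Fin.last r) ℓ.castSucc else 0)
        ≤ ∑ ℓ, P 1 1 (Fin.last r) ℓ := by
      have e1 : ∀ k : Fin r, (∑ ℓ : Fin r, if (k:ℕ) = 0 then P 1 1 (Fin.last r) ℓ.castSucc else 0)
          = (if (k:ℕ) = 0 then (∑ ℓ : Fin r, P 1 1 (Fin.last r) ℓ.castSucc) else 0) := by
        intro k; split <;> simp
      rw [Finset.sum_congr rfl fun k _ => e1 k, zg_sum_ite_zero hr]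
      exact zg_sum_castSucc_le _ (fun ℓ => hpos 1 1 (Fin.last r) ℓ)
    calc (∑ k : Fin r, ∑ ℓ : Fin r, if k < ℓ then mergeLast P 1 1 k ℓ else 0)
        ≤ ∑ k : Fin r, ∑ ℓ : Fin r,
            ((if k < ℓ then P 1 1 k.castSucc ℓ.castSucc else 0)
              + (if (k:ℕ) = 0 then P 1 1 (Fin.last r) ℓ.castSucc else 0)) :=
          Finset.sum_le_sum fun k _ => Finset.sum_le_sum fun ℓ _ => step k ℓ
      _ = (∑ k : Fin r, ∑ ℓ : Fin r, if k < ℓ then P 1 1 k.castSucc ℓ.castSucc else 0)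
          + (∑ k : Fin r, ∑ ℓ : Fin r, if (k:ℕ) = 0 then P 1 1 (Fin.last r) ℓ.castSucc else 0) := by
          rw [← Finset.sum_add_distrib]
          exact Finset.sum_congr rfl fun k _ => Finset.sum_add_distrib
      _ ≤ A + (∑ ℓ, P 1 1 (Fin.last r) ℓ) := add_le_add h1 h2
  -- Part 2 : the (0,1), ℓ<k block
  have part2 : (∑ k : Fin r, ∑ ℓ : Fin r, if ℓ < k then mergeLast P 0 1 k ℓ else 0)
      ≤ B + (∑ k, P 0 1 k (Fin.last r)) := by
    have step : ∀ k ℓ : Fin r, (if ℓ < k then mergeLast P 0 1 k ℓ else 0) ≤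
        (if ℓ < k then P 0 1 k.castSucc ℓ.castSucc else 0)
        + (if (ℓ:ℕ) = 0 then P 0 1 k.castSucc (Fin.last r) else 0) := by
      intro k ℓ
      by_cases h : ℓ < k
      · have hk : ¬ (k:ℕ) = 0 := by have hh := Fin.lt_def.mp h; omega
        simp [mergeLast, h, hk]
      · rw [if_neg h, if_neg h]
        have := zg_ite_nonneg ((ℓ:ℕ)=0) (P 0 1 k.castSucc (Fin.last r)) (hpos 0 1 _ _)
        linarith
    have h1 : (∑ k : Fin r, ∑ ℓ : Fin r, if ℓ < k then P 0 1 k.castSucc ℓ.castSucc else 0) ≤ B := by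
      rw [hB]
      have h := zg_sum2_castSucc_le (fun a b => if b < a then P 0 1 a b else 0)
        (fun a b => zg_ite_nonneg _ _ (hpos 0 1 a b))
      simpa [Fin.castSucc_lt_castSucc_iff] using h
    have h2 : (∑ k : Fin r, ∑ ℓ : Fin r, if (ℓ:ℕ) = 0 then P 0 1 k.castSucc (Fin.last r) else 0)
        ≤ ∑ k, P 0 1 k (Fin.last r) := by
      have e1 : ∀ k : Fin r, (∑ ℓ : Fin r, if (ℓ:ℕ) = 0 then P 0 1 k.castSucc (Fin.last r) else 0)
          = P 0 1 k.castSucc (Fin.last r) := fun k => zg_sum_ite_zero hr _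
      rw [Finset.sum_congr rfl fun k _ => e1 k]
      exact zg_sum_castSucc_le (fun k => P 0 1 k (Fin.last r)) (fun k => hpos 0 1 k _)
    calc (∑ k : Fin r, ∑ ℓ : Fin r, if ℓ < k then mergeLast P 0 1 k ℓ else 0)
        ≤ ∑ k : Fin r, ∑ ℓ : Fin r,
            ((if ℓ < k then P 0 1 k.castSucc ℓ.castSucc else 0)
              + (if (ℓ:ℕ) = 0 then P 0 1 k.castSucc (Fin.last r) else 0)) :=
          Finset.sum_le_sum fun k _ => Finset.sum_le_sum fun ℓ _ => step k ℓ
      _ = (∑ k : Fin r, ∑ ℓ : Fin r, if ℓ < k then P 0 1 k.castSucc ℓ.castSucc else 0)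
          + (∑ k : Fin r, ∑ ℓ : Fin r, if (ℓ:ℕ) = 0 then P 0 1 k.castSucc (Fin.last r) else 0) := by
          rw [← Finset.sum_add_distrib]
          exact Finset.sum_congr rfl fun k _ => Finset.sum_add_distrib
      _ ≤ B + (∑ k, P 0 1 k (Fin.last r)) := add_le_add h1 h2
  -- Part 3 : the (0,0), k<ℓ block
  have part3 : (∑ k : Fin r, ∑ ℓ : Fin r, if k < ℓ then mergeLast P 0 0 k ℓ else 0)
      ≤ C + (∑ ℓ, P 0 0 (Fin.last r) ℓ) := by
    have step : ∀ k ℓ : Fin r, (if k < ℓ then mergeLast P 0 0 k ℓ else 0) ≤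
        (if k < ℓ then P 0 0 k.castSucc ℓ.castSucc else 0)
        + (if (k:ℕ) = 0 then P 0 0 (Fin.last r) ℓ.castSucc else 0) := by
      intro k ℓ
      by_cases h : k < ℓ
      · have hℓ : ¬ (ℓ:ℕ) = 0 := by have hh := Fin.lt_def.mp h; omega
        simp [mergeLast, h, hℓ]
      · rw [if_neg h, if_neg h]
        have := zg_ite_nonneg ((k:ℕ)=0) (P 0 0 (Fin.last r) ℓ.castSucc) (hpos 0 0 _ _)
        linarith
    have h1 : (∑ k : Fin r, ∑ ℓ : Fin r, if k < ℓ then P 0 0 k.castSucc ℓ.castSucc else 0) ≤ C := by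
      rw [hC]
      have h := zg_sum2_castSucc_le (fun a b => if a < b then P 0 0 a b else 0)
        (fun a b => zg_ite_nonneg _ _ (hpos 0 0 a b))
      simpa [Fin.castSucc_lt_castSucc_iff] using h
    have h2 : (∑ k : Fin r, ∑ ℓ : Fin r, if (k:ℕ) = 0 then P 0 0 (Fin.last r) ℓ.castSucc else 0)
        ≤ ∑ ℓ, P 0 0 (Fin.last r) ℓ := by
      have e1 : ∀ k : Fin r, (∑ ℓ : Fin r, if (k:ℕ) = 0 then P 0 0 (Fin.last r) ℓ.castSucc else 0)
          = (if (k:ℕ) = 0 then (∑ ℓ : Fin r, P 0 0 (Fin.last r) ℓ.castSucc) else 0) := by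
        intro k; split <;> simp
      rw [Finset.sum_congr rfl fun k _ => e1 k, zg_sum_ite_zero hr]
      exact zg_sum_castSucc_le _ (fun ℓ => hpos 0 0 (Fin.last r) ℓ)
    calc (∑ k : Fin r, ∑ ℓ : Fin r, if k < ℓ then mergeLast P 0 0 k ℓ else 0)
        ≤ ∑ k : Fin r, ∑ ℓ : Fin r,
            ((if k < ℓ then P 0 0 k.castSucc ℓ.castSucc else 0)
              + (if (k:ℕ) = 0 then P 0 0 (Fin.last r) ℓ.castSucc else 0)) :=
          Finset.sum_le_sum fun k _ => Finset.sum_le_sum fun ℓ _ => step k ℓ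
      _ = (∑ k : Fin r, ∑ ℓ : Fin r, if k < ℓ then P 0 0 k.castSucc ℓ.castSucc else 0)
          + (∑ k : Fin r, ∑ ℓ : Fin r, if (k:ℕ) = 0 then P 0 0 (Fin.last r) ℓ.castSucc else 0) := by
          rw [← Finset.sum_add_distrib]
          exact Finset.sum_congr rfl fun k _ => Finset.sum_add_distrib
      _ ≤ C + (∑ ℓ, P 0 0 (Fin.last r) ℓ) := add_le_add h1 h2
  -- Part 4 : the (1,0), ℓ≤k block
  have part4 : (∑ k : Fin r, ∑ ℓ : Fin r, if ℓ ≤ k then mergeLast P 1 0 k ℓ else 0)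
      ≤ D + (∑ ℓ, P 1 0 (Fin.last r) ℓ) + (∑ k, P 1 0 k (Fin.last r))
        + P 1 0 (Fin.last r) (Fin.last r) := by
    have step : ∀ k ℓ : Fin r, (if ℓ ≤ k then mergeLast P 1 0 k ℓ else 0) ≤
        (if ℓ ≤ k then P 1 0 k.castSucc ℓ.castSucc else 0)
        + (if (k:ℕ) = 0 then P 1 0 (Fin.last r) ℓ.castSucc else 0)
        + (if (ℓ:ℕ) = 0 then P 1 0 k.castSucc (Fin.last r) else 0)
        + (if (k:ℕ) = 0 ∧ (ℓ:ℕ) = 0 then P 1 0 (Fin.last r) (Fin.last r) else 0) := by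
      intro k ℓ
      by_cases h : ℓ ≤ k
      · simp [mergeLast, h]
      · rw [if_neg h, if_neg h]
        have i1 := zg_ite_nonneg ((k:ℕ)=0) (P 1 0 (Fin.last r) ℓ.castSucc) (hpos 1 0 _ _)
        have i2 := zg_ite_nonneg ((ℓ:ℕ)=0) (P 1 0 k.castSucc (Fin.last r)) (hpos 1 0 _ _)
        have i3 := zg_ite_nonneg ((k:ℕ)=0 ∧ (ℓ:ℕ)=0) (P 1 0 (Fin.last r) (Fin.last r)) (hpos 1 0 _ _)
        linarith
    have h1 : (∑ k : Fin r, ∑ ℓ : Fin r, if ℓ ≤ k then P 1 0 k.castSucc ℓ.castSucc else 0) ≤ D := by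
      rw [hD]
      have h := zg_sum2_castSucc_le (fun a b => if b ≤ a then P 1 0 a b else 0)
        (fun a b => zg_ite_nonneg _ _ (hpos 1 0 a b))
      simpa [Fin.castSucc_le_castSucc_iff] using h
    have h2 : (∑ k : Fin r, ∑ ℓ : Fin r, if (k:ℕ) = 0 then P 1 0 (Fin.last r) ℓ.castSucc else 0)
        ≤ ∑ ℓ, P 1 0 (Fin.last r) ℓ := by
      have e1 : ∀ k : Fin r, (∑ ℓ : Fin r, if (k:ℕ) = 0 then P 1 0 (Fin.last r) ℓ.castSucc else 0)
          = (if (k:ℕ) = 0 then (∑ ℓ : Fin r, P 1 0 (Fin.last r) ℓ.castSucc) else 0) := by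
        intro k; split <;> simp
      rw [Finset.sum_congr rfl fun k _ => e1 k, zg_sum_ite_zero hr]
      exact zg_sum_castSucc_le _ (fun ℓ => hpos 1 0 (Fin.last r) ℓ)
    have h3 : (∑ k : Fin r, ∑ ℓ : Fin r, if (ℓ:ℕ) = 0 then P 1 0 k.castSucc (Fin.last r) else 0)
        ≤ ∑ k, P 1 0 k (Fin.last r) := by
      have e1 : ∀ k : Fin r, (∑ ℓ : Fin r, if (ℓ:ℕ) = 0 then P 1 0 k.castSucc (Fin.last r) else 0)
          = P 1 0 k.castSucc (Fin.last r) := fun k => zg_sum_ite_zero hr _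
      rw [Finset.sum_congr rfl fun k _ => e1 k]
      exact zg_sum_castSucc_le (fun k => P 1 0 k (Fin.last r)) (fun k => hpos 1 0 k _)
    have h4 : (∑ k : Fin r, ∑ ℓ : Fin r,
          if (k:ℕ) = 0 ∧ (ℓ:ℕ) = 0 then P 1 0 (Fin.last r) (Fin.last r) else 0)
        = P 1 0 (Fin.last r) (Fin.last r) := by
      have e0 : ∀ k ℓ : Fin r, (if (k:ℕ) = 0 ∧ (ℓ:ℕ) = 0 then P 1 0 (Fin.last r) (Fin.last r) else 0)
          = (if (k:ℕ) = 0 then (if (ℓ:ℕ) = 0 then P 1 0 (Fin.last r) (Fin.last r) else 0) else 0) := by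
        intro k ℓ
        by_cases hk : (k:ℕ) = 0 <;> by_cases hl : (ℓ:ℕ) = 0 <;> simp [hk, hl]
      have e1 : ∀ k : Fin r, (∑ ℓ : Fin r,
          if (k:ℕ) = 0 ∧ (ℓ:ℕ) = 0 then P 1 0 (Fin.last r) (Fin.last r) else 0)
          = (if (k:ℕ) = 0 then P 1 0 (Fin.last r) (Fin.last r) else 0) := by
        intro k
        rw [Finset.sum_congr rfl fun ℓ _ => e0 k ℓ]
        by_cases hk : (k:ℕ) = 0
        · simp only [hk, if_true]
          exact zg_sum_ite_zero hr _
        · simp [hk]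
      rw [Finset.sum_congr rfl fun k _ => e1 k]
      exact zg_sum_ite_zero hr _
    calc (∑ k : Fin r, ∑ ℓ : Fin r, if ℓ ≤ k then mergeLast P 1 0 k ℓ else 0)
        ≤ ∑ k : Fin r, ∑ ℓ : Fin r,
            ((if ℓ ≤ k then P 1 0 k.castSucc ℓ.castSucc else 0)
              + (if (k:ℕ) = 0 then P 1 0 (Fin.last r) ℓ.castSucc else 0)
              + (if (ℓ:ℕ) = 0 then P 1 0 k.castSucc (Fin.last r) else 0)
              + (if (k:ℕ) = 0 ∧ (ℓ:ℕ) = 0 then P 1 0 (Fin.last r) (Fin.last r) else 0)) :=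
          Finset.sum_le_sum fun k _ => Finset.sum_le_sum fun ℓ _ => step k ℓ
      _ = (∑ k : Fin r, ∑ ℓ : Fin r, if ℓ ≤ k then P 1 0 k.castSucc ℓ.castSucc else 0)
          + (∑ k : Fin r, ∑ ℓ : Fin r, if (k:ℕ) = 0 then P 1 0 (Fin.last r) ℓ.castSucc else 0)
          + (∑ k : Fin r, ∑ ℓ : Fin r, if (ℓ:ℕ) = 0 then P 1 0 k.castSucc (Fin.last r) else 0)
          + (∑ k : Fin r, ∑ ℓ : Fin r,
              if (k:ℕ) = 0 ∧ (ℓ:ℕ) = 0 then P 1 0 (Fin.last r) (Fin.last r) else 0) := by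
          simp only [Finset.sum_add_distrib]
      _ ≤ D + (∑ ℓ, P 1 0 (Fin.last r) ℓ) + (∑ k, P 1 0 k (Fin.last r))
          + P 1 0 (Fin.last r) (Fin.last r) := by
          rw [h4]
          exact add_le_add (add_le_add (add_le_add h1 h2) h3) le_rfl
  -- assemble
  have hZGP : ZG P = A + B + C + D := rfl
  have hZGM : ZG (mergeLast P)
      = (∑ k : Fin r, ∑ ℓ : Fin r, if k < ℓ then mergeLast P 1 1 k ℓ else 0)
      + (∑ k : Fin r, ∑ ℓ : Fin r, if ℓ < k then mergeLast P 0 1 k ℓ else 0)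
      + (∑ k : Fin r, ∑ ℓ : Fin r, if k < ℓ then mergeLast P 0 0 k ℓ else 0)
      + (∑ k : Fin r, ∑ ℓ : Fin r, if ℓ ≤ k then mergeLast P 1 0 k ℓ else 0) := rfl
  rw [hZGM, hZGP]
  linarith [part1, part2, part3, part4, hrow10, hrow11, hdiag11, hcol11, hcol01,
    hdiag01, hrow01, hrow00, hdiag00, hcol00, hcol10, hdiag10]
end
end
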